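/- arXiv:1405.6229 — 8 statements merged into one kernel-verified Lean document; each statement's English description precedes it below -/
import Mathlib

section
/- For real numbers a, b and p ≥ 2, the inequality 2^(p-1)(|a|^p + |b|^p) ≥ |a+b|^p + |a-b|^p holds. -/
/-!
Put `q = p / 2 ≥ 1`. By the parallelogram law `|a + b|² + |a - b|² = 2 (|a|² + |b|²)`, so
superadditivity of `t ↦ t ^ q` followed by its convexity gives
`|a + b|^p + |a - b|^p ≤ (2 (|a|² + |b|²))^q ≤ 2^q · 2^(q-1) (|a|^p + |b|^p)`.
-/

open scoped NNReal

namespace NNReal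

lemma rpow_eq_sq_rpow_half (x : ℝ≥0) (p : ℝ) : x ^ p = (x ^ 2) ^ (p / 2) := by
  rw [← rpow_natCast_mul]
  congr 1
  push_cast
  ring

lemma rpow_add_rpow_le_of_sq_add_sq_eq {x y u v : ℝ≥0} {p : ℝ} (hp : 2 ≤ p)
    (h : x ^ 2 + y ^ 2 = 2 * (u ^ 2 + v ^ 2)) :
    x ^ p + y ^ p ≤ 2 ^ (p - 1) * (u ^ p + v ^ p) := by
  have hq : 1 ≤ p / 2 := by linarith
  simp only [rpow_eq_sq_rpow_half _ p]
  calc (x ^ 2) ^ (p / 2) + (y ^ 2) ^ (p / 2)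
      ≤ (x ^ 2 + y ^ 2) ^ (p / 2) := add_rpow_le_rpow_add _ _ hq
    _ = 2 ^ (p / 2) * (u ^ 2 + v ^ 2) ^ (p / 2) := by rw [h, mul_rpow]
    _ ≤ 2 ^ (p / 2) * (2 ^ (p / 2 - 1) * ((u ^ 2) ^ (p / 2) + (v ^ 2) ^ (p / 2))) := by
      gcongr
      exact rpow_add_le_mul_rpow_add_rpow _ _ hq
    _ = 2 ^ (p - 1) * ((u ^ 2) ^ (p / 2) + (v ^ 2) ^ (p / 2)) := by
      rw [← mul_assoc, ← rpow_add two_ne_zero, show p / 2 + (p / 2 - 1) = p - 1 by ring]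

end NNReal

theorem norm_add_rpow_add_norm_sub_rpow_le {𝕜 E : Type*} [RCLike 𝕜] [NormedAddCommGroup E]
    [InnerProductSpace 𝕜 E] (a b : E) {p : ℝ} (hp : 2 ≤ p) :
    ‖a + b‖ ^ p + ‖a - b‖ ^ p ≤ 2 ^ (p - 1) * (‖a‖ ^ p + ‖b‖ ^ p) := by
  have h := NNReal.rpow_add_rpow_le_of_sq_add_sq_eq hp (parallelogram_law_with_nnnorm 𝕜 a b)
  exact_mod_cast h

theorem clarkson_scalar (a b p : ℝ) (hp : 2 ≤ p) :
    |a + b| ^ p + |a - b| ^ p ≤ 2 ^ (p - 1) * (|a| ^ p + |b| ^ p) := by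
  simpa only [Real.norm_eq_abs] using norm_add_rpow_add_norm_sub_rpow_le (𝕜 := ℝ) a b hp
end

section
/- Let p ∈ [1, 2] and φ, ψ ∈ L^p(μ). Then (‖φ‖_p + ‖ψ‖_p)^p + |‖φ‖_p - ‖ψ‖_p|^p ≤ ‖φ+ψ‖_p^p + ‖φ-ψ‖_p^p. -/
/-!
Hanner's argument. For `0 < r ≤ 1` let `α(r) = (1+r)^(p-1) + (1-r)^(p-1)` and
`β(r) = r^(1-p) ((1+r)^(p-1) - (1-r)^(p-1))`. For fixed `0 ≤ R ≤ 1` the function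
`r ↦ α(r) + β(r) R^p` has derivative `α'(r) (1 - (R/r)^p)`, and `α' ≤ 0` because `p ≤ 2`;
so it is largest at `r = R`, where it equals `(1+R)^p + (1-R)^p`. By homogeneity, and using
`β ≤ α` when `|b| > |a|`, this gives `α(r)|a|^p + β(r)|b|^p ≤ |a+b|^p + |a-b|^p` for all
real `a, b`. Integrate this with `r = ‖ψ‖/‖φ‖` (for `‖ψ‖ ≤ ‖φ‖`): by the equality case,
`α(r)‖φ‖^p + β(r)‖ψ‖^p = (‖φ‖+‖ψ‖)^p + (‖φ‖-‖ψ‖)^p`.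
-/

open MeasureTheory Real Set

noncomputable def hannerAlpha (p r : ℝ) : ℝ := (1 + r) ^ (p - 1) + (1 - r) ^ (p - 1)

noncomputable def hannerBeta (p r : ℝ) : ℝ := r ^ (1 - p) * ((1 + r) ^ (p - 1) - (1 - r) ^ (p - 1))

noncomputable def hannerAlphaDeriv (p r : ℝ) : ℝ :=
  (p - 1) * ((1 + r) ^ (p - 2) - (1 - r) ^ (p - 2))

section Scalar

variable {p r : ℝ}

lemma hasDerivAt_one_add_rpow (q : ℝ) (h : -1 < r) :
    HasDerivAt (fun r : ℝ => (1 + r) ^ q) (q * (1 + r) ^ (q - 1)) r :=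
  (((hasDerivAt_id' r).const_add 1).rpow_const (Or.inl (by linarith))).congr_deriv (by ring)

lemma hasDerivAt_one_sub_rpow (q : ℝ) (h : r < 1) :
    HasDerivAt (fun r : ℝ => (1 - r) ^ q) (-(q * (1 - r) ^ (q - 1))) r :=
  (((hasDerivAt_id' r).const_sub 1).rpow_const (Or.inl (by linarith))).congr_deriv (by ring)

lemma hasDerivAt_hannerAlpha (h₀ : -1 < r) (h₁ : r < 1) :
    HasDerivAt (hannerAlpha p) (hannerAlphaDeriv p r) r :=
  ((hasDerivAt_one_add_rpow (p - 1) h₀).add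
    (hasDerivAt_one_sub_rpow (p - 1) h₁)).congr_deriv <| by
    rw [hannerAlphaDeriv, show p - 1 - 1 = p - 2 by ring]; ring

lemma hasDerivAt_hannerBeta (h₀ : 0 < r) (h₁ : r < 1) :
    HasDerivAt (hannerBeta p) (-(r ^ (-p) * hannerAlphaDeriv p r)) r := by
  have hr : HasDerivAt (fun r : ℝ => r ^ (1 - p)) ((1 - p) * r ^ (-p)) r :=
    ((hasDerivAt_id' r).rpow_const (Or.inl h₀.ne')).congr_deriv (by ring_nf)
  refine (hr.mul ((hasDerivAt_one_add_rpow (p - 1) (by linarith)).sub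
    (hasDerivAt_one_sub_rpow (p - 1) h₁))).congr_deriv ?_
  have hpow {x : ℝ} (hx : 0 < x) : x ^ (p - 1) = x ^ (p - 2) * x := by
    rw [← rpow_add_one hx.ne']; ring_nf
  rw [Pi.sub_apply, hannerAlphaDeriv, show p - 1 - 1 = p - 2 by ring,
    hpow (by linarith : 0 < 1 + r), hpow (by linarith : 0 < 1 - r),
    show 1 - p = -p + 1 by ring, rpow_add_one h₀.ne']
  ring

lemma hasDerivAt_hannerAlpha_add_hannerBeta_mul (c : ℝ) (h₀ : 0 < r) (h₁ : r < 1) :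
    HasDerivAt (fun r => hannerAlpha p r + hannerBeta p r * c)
      (hannerAlphaDeriv p r * (1 - c / r ^ p)) r :=
  ((hasDerivAt_hannerAlpha (by linarith) h₁).add
    ((hasDerivAt_hannerBeta h₀ h₁).mul_const c)).congr_deriv <| by
    rw [rpow_neg h₀.le]; ring

lemma hannerAlphaDeriv_nonpos (hp₁ : 1 ≤ p) (hp₂ : p ≤ 2) (h₀ : 0 ≤ r) (h₁ : r < 1) :
    hannerAlphaDeriv p r ≤ 0 :=
  mul_nonpos_of_nonneg_of_nonpos (by linarith) <| sub_nonpos.2 <|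
    rpow_le_rpow_of_nonpos (by linarith) (by linarith) (by linarith)

lemma continuousOn_hannerAlpha_add_hannerBeta_mul (hp : 1 ≤ p) (c : ℝ) :
    ContinuousOn (fun r => hannerAlpha p r + hannerBeta p r * c) (Ioi 0) := by
  have hq : Continuous fun x : ℝ => x ^ (p - 1) := continuous_rpow_const (by linarith)
  have hadd : Continuous fun r : ℝ => (1 + r) ^ (p - 1) := hq.comp (by fun_prop)
  have hsub : Continuous fun r : ℝ => (1 - r) ^ (p - 1) := hq.comp (by fun_prop)
  have hβ : ContinuousOn (fun r : ℝ => r ^ (1 - p)) (Ioi 0) :=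
    fun x hx => (continuousAt_rpow_const x _ (.inl (ne_of_gt hx))).continuousWithinAt
  exact (hadd.add hsub).continuousOn.add
    ((hβ.mul (hadd.sub hsub).continuousOn).mul continuousOn_const)

lemma monotoneOn_hannerAlpha_add_hannerBeta_mul (hp₁ : 1 ≤ p) (hp₂ : p ≤ 2) {a b c : ℝ}
    (ha : 0 < a) (hb : b ≤ 1) (hc : b ^ p ≤ c) :
    MonotoneOn (fun r => hannerAlpha p r + hannerBeta p r * c) (Icc a b) := by
  refine monotoneOn_of_hasDerivWithinAt_nonneg (convex_Icc a b)
    (f' := fun x => hannerAlphaDeriv p x * (1 - c / x ^ p))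
    ((continuousOn_hannerAlpha_add_hannerBeta_mul hp₁ c).mono fun x hx => ha.trans_le hx.1)
    (fun x hx => ?_) (fun x hx => ?_) <;> rw [interior_Icc] at hx
  · exact (hasDerivAt_hannerAlpha_add_hannerBeta_mul c (ha.trans hx.1)
      (hx.2.trans_le hb)).hasDerivWithinAt
  · have hx₀ : 0 < x := ha.trans hx.1
    have : 1 ≤ c / x ^ p := (one_le_div (rpow_pos_of_pos hx₀ p)).2 <|
      (rpow_le_rpow hx₀.le hx.2.le (by linarith)).trans hc
    exact mul_nonneg_of_nonpos_of_nonpos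
      (hannerAlphaDeriv_nonpos hp₁ hp₂ hx₀.le (hx.2.trans_le hb)) (by linarith)

lemma antitoneOn_hannerAlpha_add_hannerBeta_mul (hp₁ : 1 ≤ p) (hp₂ : p ≤ 2) {a c : ℝ}
    (ha : 0 < a) (hc : c ≤ a ^ p) :
    AntitoneOn (fun r => hannerAlpha p r + hannerBeta p r * c) (Icc a 1) := by
  refine antitoneOn_of_hasDerivWithinAt_nonpos (convex_Icc a 1)
    (f' := fun x => hannerAlphaDeriv p x * (1 - c / x ^ p))
    ((continuousOn_hannerAlpha_add_hannerBeta_mul hp₁ c).mono fun x hx => ha.trans_le hx.1)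
    (fun x hx => ?_) (fun x hx => ?_) <;> rw [interior_Icc] at hx
  · exact (hasDerivAt_hannerAlpha_add_hannerBeta_mul c (ha.trans hx.1) hx.2).hasDerivWithinAt
  · have hx₀ : 0 < x := ha.trans hx.1
    have : c / x ^ p ≤ 1 := (div_le_one (rpow_pos_of_pos hx₀ p)).2 <|
      hc.trans (rpow_le_rpow ha.le hx.1.le (by linarith))
    exact mul_nonpos_of_nonpos_of_nonneg
      (hannerAlphaDeriv_nonpos hp₁ hp₂ hx₀.le hx.2) (by linarith)

lemma hannerBeta_le_hannerAlpha (hp₁ : 1 ≤ p) (hp₂ : p ≤ 2) (h₀ : 0 < r) (h₁ : r ≤ 1) :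
    hannerBeta p r ≤ hannerAlpha p r := by
  have hanti := antitoneOn_hannerAlpha_add_hannerBeta_mul hp₁ hp₂ h₀
    (neg_one_lt_zero.trans (rpow_pos_of_pos h₀ p)).le ⟨le_rfl, h₁⟩ ⟨h₁, le_rfl⟩ h₁
  have hend : 0 ≤ hannerAlpha p 1 + hannerBeta p 1 * -1 := by
    norm_num [hannerAlpha, hannerBeta]
    linarith [rpow_nonneg (le_refl (0 : ℝ)) (p - 1)]
  linarith

lemma hannerAlpha_le_two (hp₁ : 1 ≤ p) (hp₂ : p ≤ 2) (h₀ : -1 ≤ r) (h₁ : r ≤ 1) :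
    hannerAlpha p r ≤ 2 := by
  have := (concaveOn_rpow (p := p - 1) (by linarith) (by linarith)).2
    (show 0 ≤ 1 + r by linarith) (show 0 ≤ 1 - r by linarith)
    (by norm_num : (0 : ℝ) ≤ 1 / 2) (by norm_num : (0 : ℝ) ≤ 1 / 2) (by norm_num)
  rw [smul_eq_mul, smul_eq_mul, smul_eq_mul, smul_eq_mul] at this
  beta_reduce at this
  rw [show 1 / 2 * (1 + r) + 1 / 2 * (1 - r) = 1 by ring, one_rpow] at this
  rw [hannerAlpha]
  linarith

lemma hannerAlpha_add_hannerBeta_mul_rpow_self (hp : 0 < p) (h₀ : 0 < r) (h₁ : r ≤ 1) :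
    hannerAlpha p r + hannerBeta p r * r ^ p = (1 + r) ^ p + (1 - r) ^ p := by
  have hpow {x : ℝ} (hx : 0 ≤ x) : x ^ p = x ^ (p - 1) * x := by
    rw [← rpow_add_one' hx (by linarith)]; ring_nf
  have hr : r ^ (1 - p) * r ^ p = r := by
    rw [← rpow_add h₀]; simp
  rw [hpow (by linarith : (0 : ℝ) ≤ 1 + r), hpow (by linarith : (0 : ℝ) ≤ 1 - r), hannerAlpha,
    hannerBeta, mul_right_comm, hr]
  ring

lemma hannerAlpha_add_hannerBeta_mul_rpow_le (hp₁ : 1 ≤ p) (hp₂ : p ≤ 2) {R : ℝ} (hR₀ : 0 ≤ R)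
    (hR₁ : R ≤ 1) (h₀ : 0 < r) (h₁ : r ≤ 1) :
    hannerAlpha p r + hannerBeta p r * R ^ p ≤ (1 + R) ^ p + (1 - R) ^ p := by
  rcases hR₀.eq_or_lt with rfl | hR₀
  · have := hannerAlpha_le_two hp₁ hp₂ (by linarith) h₁
    simp only [zero_rpow (by linarith : p ≠ 0), add_zero, sub_zero, one_rpow, mul_zero]
    linarith
  rw [← hannerAlpha_add_hannerBeta_mul_rpow_self (by linarith) hR₀ hR₁]
  rcases le_total r R with h | h
  · exact monotoneOn_hannerAlpha_add_hannerBeta_mul hp₁ hp₂ h₀ hR₁ le_rfl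
      ⟨le_rfl, h⟩ ⟨h, le_rfl⟩ h
  · exact antitoneOn_hannerAlpha_add_hannerBeta_mul hp₁ hp₂ hR₀ le_rfl
      ⟨le_rfl, h.trans h₁⟩ ⟨h, h₁⟩ h

lemma rpow_add_add_rpow_sub_eq_mul {x y : ℝ} (hx : 0 < x) (hy : 0 ≤ y) (hyx : y ≤ x) :
    (x + y) ^ p + (x - y) ^ p = x ^ p * ((1 + y / x) ^ p + (1 - y / x) ^ p) := by
  rw [show 1 + y / x = (x + y) / x by field_simp, show 1 - y / x = (x - y) / x by field_simp,
    div_rpow (by linarith) hx.le, div_rpow (by linarith) hx.le]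
  field_simp

lemma hannerAlpha_mul_rpow_add_hannerBeta_mul_rpow_le (hp₁ : 1 ≤ p) (hp₂ : p ≤ 2)
    (h₀ : 0 < r) (h₁ : r ≤ 1) {x y : ℝ} (hy : 0 ≤ y) (hyx : y ≤ x) :
    hannerAlpha p r * x ^ p + hannerBeta p r * y ^ p ≤ (x + y) ^ p + (x - y) ^ p := by
  rcases (hy.trans hyx).eq_or_lt with rfl | hx
  · obtain rfl : y = 0 := le_antisymm hyx hy
    simp [zero_rpow (by linarith : p ≠ 0)]
  have hyp : y ^ p = x ^ p * (y / x) ^ p := by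
    rw [div_rpow hy hx.le]; field_simp
  rw [rpow_add_add_rpow_sub_eq_mul hx hy hyx, hyp]
  calc hannerAlpha p r * x ^ p + hannerBeta p r * (x ^ p * (y / x) ^ p)
      = x ^ p * (hannerAlpha p r + hannerBeta p r * (y / x) ^ p) := by ring
    _ ≤ x ^ p * ((1 + y / x) ^ p + (1 - y / x) ^ p) :=
      mul_le_mul_of_nonneg_left (hannerAlpha_add_hannerBeta_mul_rpow_le hp₁ hp₂
        (div_nonneg hy hx.le) (div_le_one_of_le₀ hyx hx.le) h₀ h₁) (by positivity)

lemma hannerAlpha_mul_rpow_add_hannerBeta_mul_rpow_eq (hp : 0 < p) {x y : ℝ} (hy : 0 < y)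
    (hyx : y ≤ x) :
    hannerAlpha p (y / x) * x ^ p + hannerBeta p (y / x) * y ^ p =
      (x + y) ^ p + (x - y) ^ p := by
  have hx : 0 < x := hy.trans_le hyx
  have hyp : y ^ p = x ^ p * (y / x) ^ p := by
    rw [div_rpow hy.le hx.le]; field_simp
  rw [rpow_add_add_rpow_sub_eq_mul hx hy.le hyx, hyp,
    ← hannerAlpha_add_hannerBeta_mul_rpow_self hp (div_pos hy hx) (div_le_one_of_le₀ hyx hx.le)]
  ring

lemma abs_add_rpow_add_abs_sub_rpow (a b : ℝ) :
    |a + b| ^ p + |a - b| ^ p = (|a| + |b|) ^ p + |(|a| - |b|)| ^ p := by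
  wlog ha : 0 ≤ a generalizing a
  · have h := this (-a) (by linarith)
    rwa [neg_add_eq_sub, abs_sub_comm, ← neg_add', abs_neg, abs_neg, add_comm (|a - b| ^ p)] at h
  wlog hb : 0 ≤ b generalizing b
  · have h := this (-b) (by linarith)
    rwa [sub_neg_eq_add, ← sub_eq_add_neg, abs_neg, add_comm (|a - b| ^ p)] at h
  rw [abs_of_nonneg ha, abs_of_nonneg hb, abs_of_nonneg (add_nonneg ha hb)]

lemma hannerAlpha_mul_abs_rpow_add_hannerBeta_mul_abs_rpow_le (hp₁ : 1 ≤ p) (hp₂ : p ≤ 2)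
    (h₀ : 0 < r) (h₁ : r ≤ 1) (a b : ℝ) :
    hannerAlpha p r * |a| ^ p + hannerBeta p r * |b| ^ p ≤ |a + b| ^ p + |a - b| ^ p := by
  rw [abs_add_rpow_add_abs_sub_rpow]
  rcases le_total |b| |a| with h | h
  · rw [abs_of_nonneg (sub_nonneg.2 h)]
    exact hannerAlpha_mul_rpow_add_hannerBeta_mul_rpow_le hp₁ hp₂ h₀ h₁ (abs_nonneg b) h
  · rw [abs_sub_comm, abs_of_nonneg (sub_nonneg.2 h), add_comm |a|]
    have hβα := hannerBeta_le_hannerAlpha hp₁ hp₂ h₀ h₁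
    have hab : |a| ^ p ≤ |b| ^ p := rpow_le_rpow (abs_nonneg a) h (by linarith)
    calc hannerAlpha p r * |a| ^ p + hannerBeta p r * |b| ^ p
        ≤ hannerAlpha p r * |b| ^ p + hannerBeta p r * |a| ^ p := by
          nlinarith [mul_nonneg (sub_nonneg.2 hβα) (sub_nonneg.2 hab)]
      _ ≤ (|b| + |a|) ^ p + (|b| - |a|) ^ p :=
          hannerAlpha_mul_rpow_add_hannerBeta_mul_rpow_le hp₁ hp₂ h₀ h₁ (abs_nonneg a) h

end Scalar

namespace MeasureTheory.Lp

variable {X E : Type*} [MeasurableSpace X] {μ : Measure X} [NormedAddCommGroup E] {p : ℝ}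

lemma norm_rpow_eq_integral (hp : 0 < p) (f : Lp E (ENNReal.ofReal p) μ) :
    ‖f‖ ^ p = ∫ x, ‖f x‖ ^ p ∂μ := by
  have hI : 0 ≤ ∫ x, ‖f x‖ ^ p ∂μ := integral_nonneg fun x => by positivity
  rw [norm_def,
    (Lp.memLp f).eLpNorm_eq_integral_rpow_norm (by simpa using hp) ENNReal.ofReal_ne_top,
    ENNReal.toReal_ofReal hp.le, ENNReal.toReal_ofReal (by positivity), rpow_inv_rpow hI hp.ne']

lemma integrable_norm_rpow (hp : 0 < p) (f : Lp E (ENNReal.ofReal p) μ) :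
    Integrable (fun x => ‖f x‖ ^ p) μ := by
  simpa [ENNReal.toReal_ofReal hp.le] using
    (Lp.memLp f).integrable_norm_rpow (by simpa using hp) ENNReal.ofReal_ne_top

lemma mul_norm_rpow_add_mul_norm_rpow_le (hp : 0 < p) {A B : ℝ}
    (h : ∀ a b : E, A * ‖a‖ ^ p + B * ‖b‖ ^ p ≤ ‖a + b‖ ^ p + ‖a - b‖ ^ p)
    (f g : Lp E (ENNReal.ofReal p) μ) :
    A * ‖f‖ ^ p + B * ‖g‖ ^ p ≤ ‖f + g‖ ^ p + ‖f - g‖ ^ p := by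
  have hf := integrable_norm_rpow hp f
  have hg := integrable_norm_rpow hp g
  rw [norm_rpow_eq_integral hp, norm_rpow_eq_integral hp, norm_rpow_eq_integral hp,
    norm_rpow_eq_integral hp, ← integral_const_mul, ← integral_const_mul,
    ← integral_add (hf.const_mul A) (hg.const_mul B),
    ← integral_add (integrable_norm_rpow hp _) (integrable_norm_rpow hp _)]
  refine integral_mono_ae ((hf.const_mul A).add (hg.const_mul B))
    ((integrable_norm_rpow hp _).add (integrable_norm_rpow hp _)) ?_
  filter_upwards [Lp.coeFn_add f g, Lp.coeFn_sub f g] with x hadd hsub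
  simpa only [Pi.add_apply, Pi.sub_apply, hadd, hsub] using h (f x) (g x)

end MeasureTheory.Lp

theorem hanner_Lp_le_two {X : Type*} [MeasurableSpace X] (μ : Measure X)
    (p : ℝ) (hp1 : 1 ≤ p) (hp2 : p ≤ 2) (φ ψ : Lp ℝ (ENNReal.ofReal p) μ) :
    (‖φ‖ + ‖ψ‖) ^ p + |‖φ‖ - ‖ψ‖| ^ p ≤ ‖φ + ψ‖ ^ p + ‖φ - ψ‖ ^ p := by
  have : Fact (1 ≤ ENNReal.ofReal p) := ⟨ENNReal.one_le_ofReal.2 hp1⟩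
  wlog hψφ : ‖ψ‖ ≤ ‖φ‖ generalizing φ ψ
  · have h := this ψ φ (le_of_not_ge hψφ)
    rwa [add_comm ψ, norm_sub_rev, add_comm ‖ψ‖, abs_sub_comm] at h
  rcases (norm_nonneg ψ).eq_or_lt with hψ | hψ
  · obtain rfl : ψ = 0 := norm_eq_zero.1 hψ.symm
    simp
  have hp : 0 < p := by linarith
  rw [abs_of_nonneg (sub_nonneg.2 hψφ),
    ← hannerAlpha_mul_rpow_add_hannerBeta_mul_rpow_eq hp hψ hψφ]
  refine Lp.mul_norm_rpow_add_mul_norm_rpow_le hp (fun a b => ?_) φ ψ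
  simpa only [Real.norm_eq_abs] using hannerAlpha_mul_abs_rpow_add_hannerBeta_mul_abs_rpow_le
    hp1 hp2 (div_pos hψ (hψ.trans_le hψφ)) (div_le_one_of_le₀ hψφ (norm_nonneg φ)) a b
end

section
/- For p ≥ 2 and ε ∈ (0, 2], the number δ = 1 - (1 - (ε/2)^p)^(1/p) satisfies (1 - δ + ε/2)^p + |1 - δ - ε/2|^p ≥ 2; i.e., the Clarkson modulus is no larger than the Hanner modulus when p ≥ 2. -/
/-!
With `e = ε / 2` and `a = (1 - e ^ p) ^ (1 / p)` we have `1 - δ = a` and `a ^ p + e ^ p = 1`,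
so the claim is the two-point Clarkson inequality `2 (a ^ p + e ^ p) ≤ (a + e) ^ p + |a - e| ^ p`.
Writing `q = p / 2 ≥ 1`, it follows from superadditivity of `t ↦ t ^ q` applied to `a², e²`,
the parallelogram identity `a² + e² = ((a + e)² + (a - e)²) / 2`, and convexity of `t ↦ t ^ q`.
-/

namespace Real

lemma abs_rpow_eq_sq_rpow_half (z p : ℝ) : |z| ^ p = (z ^ 2) ^ (p / 2) := by
  rw [← sq_abs, ← rpow_natCast, ← rpow_mul (abs_nonneg z)]
  congr 1
  push_cast
  ring

lemma two_mul_rpow_add_rpow_le {p x y : ℝ} (hp : 2 ≤ p) (hx : 0 ≤ x) (hy : 0 ≤ y) :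
    2 * (x ^ p + y ^ p) ≤ (x + y) ^ p + |x - y| ^ p := by
  have hq : 1 ≤ p / 2 := by linarith
  have hsq (z : ℝ) (hz : 0 ≤ z) : z ^ p = (z ^ 2) ^ (p / 2) := by
    rw [← abs_rpow_eq_sq_rpow_half, abs_of_nonneg hz]
  have parallelogram : x ^ 2 + y ^ 2 = (1 / 2) * (x + y) ^ 2 + (1 / 2) * (x - y) ^ 2 := by ring
  calc 2 * (x ^ p + y ^ p) = 2 * ((x ^ 2) ^ (p / 2) + (y ^ 2) ^ (p / 2)) := by
        rw [hsq x hx, hsq y hy]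
    _ ≤ 2 * (x ^ 2 + y ^ 2) ^ (p / 2) := by
        gcongr
        exact add_rpow_le_rpow_add (sq_nonneg x) (sq_nonneg y) hq
    _ ≤ 2 * ((1 / 2) * ((x + y) ^ 2) ^ (p / 2) + (1 / 2) * ((x - y) ^ 2) ^ (p / 2)) := by
        rw [parallelogram]
        gcongr
        exact (convexOn_rpow hq).2 (sq_nonneg (x + y)) (sq_nonneg (x - y)) (by norm_num) (by norm_num)
          (by norm_num)
    _ = (x + y) ^ p + |x - y| ^ p := by
        rw [← hsq (x + y) (by positivity), ← abs_rpow_eq_sq_rpow_half]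
        ring

end Real

theorem clarkson_modulus_le_hanner_modulus (p : ℝ) (hp : 2 ≤ p)
    (ε : ℝ) (hε0 : 0 < ε) (hε2 : ε ≤ 2)
    (δ : ℝ) (hδ : δ = 1 - (1 - (ε / 2) ^ p) ^ (1 / p)) :
    2 ≤ (1 - δ + ε / 2) ^ p + |1 - δ - ε / 2| ^ p := by
  have he1 : ε / 2 ≤ 1 := by linarith
  set e := ε / 2
  have he0 : 0 ≤ e := by positivity
  have hep : e ^ p ≤ 1 := Real.rpow_le_one he0 he1 (by linarith)
  set a := (1 - e ^ p) ^ (1 / p)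
  have ha0 : 0 ≤ a := Real.rpow_nonneg (by linarith) _
  have hap : a ^ p = 1 - e ^ p := by
    simpa only [a, one_div] using Real.rpow_inv_rpow (by linarith) (by positivity)
  have clarkson := Real.two_mul_rpow_add_rpow_le hp ha0 he0
  rw [hδ, sub_sub_cancel]
  linarith
end

section
/- Let p ∈ (1, ∞) and Ω₃ = {x ∈ ℝ³ : x₁, x₂, x₃ ≥ 0 and (x₁^(1/p), x₂^(1/p), x₃^(1/p)) satisfies the triangle inequality}. Then Ω₃ is a convex cone: it is closed under nonnegative scalar multiplication and under addition. -/
/-!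
Scaling is immediate from `(k x)^(1/p) = k^(1/p) x^(1/p)`. For sums, `x₁^(1/p) ≤ x₂^(1/p) + x₃^(1/p)`
says `x₁ ≤ (x₂^(1/p) + x₃^(1/p))^p`; adding this to the same bound for `y` and taking `p`-th roots,
Minkowski's inequality in `ℓ^p` for the vectors `(x₂^(1/p), y₂^(1/p))` and `(x₃^(1/p), y₃^(1/p))`
gives `(x₁ + y₁)^(1/p) ≤ (x₂ + y₂)^(1/p) + (x₃ + y₃)^(1/p)`.
-/

/-- The natural domain of the Bellman function `B₃`. -/
def Omega3 (p : ℝ) : Set (ℝ × ℝ × ℝ) :=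
  {x | 0 ≤ x.1 ∧ 0 ≤ x.2.1 ∧ 0 ≤ x.2.2 ∧
    x.1 ^ (1 / p) ≤ x.2.1 ^ (1 / p) + x.2.2 ^ (1 / p) ∧
    x.2.1 ^ (1 / p) ≤ x.1 ^ (1 / p) + x.2.2 ^ (1 / p) ∧
    x.2.2 ^ (1 / p) ≤ x.1 ^ (1 / p) + x.2.1 ^ (1 / p)}

open Real

theorem Lp_add_le_pair {p a b c d : ℝ} (hp : 1 ≤ p)
    (ha : 0 ≤ a) (hb : 0 ≤ b) (hc : 0 ≤ c) (hd : 0 ≤ d) :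
    ((a + b) ^ p + (c + d) ^ p) ^ (1 / p) ≤
      (a ^ p + c ^ p) ^ (1 / p) + (b ^ p + d ^ p) ^ (1 / p) := by
  have hf : ∀ i ∈ Finset.univ, 0 ≤ ![a, c] i := by simp [Fin.forall_fin_two, ha, hc]
  have hg : ∀ i ∈ Finset.univ, 0 ≤ ![b, d] i := by simp [Fin.forall_fin_two, hb, hd]
  simpa [Fin.sum_univ_two] using Lp_add_le_of_nonneg Finset.univ hp hf hg

theorem rpow_triangle_smul {r k a b c : ℝ} (hk : 0 ≤ k)
    (ha : 0 ≤ a) (hb : 0 ≤ b) (hc : 0 ≤ c) (h : a ^ r ≤ b ^ r + c ^ r) :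
    (k * a) ^ r ≤ (k * b) ^ r + (k * c) ^ r := by
  rw [mul_rpow hk ha, mul_rpow hk hb, mul_rpow hk hc, ← mul_add]
  exact mul_le_mul_of_nonneg_left h (rpow_nonneg hk r)

theorem rpow_triangle_add {p x₁ x₂ x₃ y₁ y₂ y₃ : ℝ} (hp : 1 ≤ p)
    (hx₁ : 0 ≤ x₁) (hx₂ : 0 ≤ x₂) (hx₃ : 0 ≤ x₃) (hy₁ : 0 ≤ y₁) (hy₂ : 0 ≤ y₂) (hy₃ : 0 ≤ y₃)
    (hx : x₁ ^ (1 / p) ≤ x₂ ^ (1 / p) + x₃ ^ (1 / p))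
    (hy : y₁ ^ (1 / p) ≤ y₂ ^ (1 / p) + y₃ ^ (1 / p)) :
    (x₁ + y₁) ^ (1 / p) ≤ (x₂ + y₂) ^ (1 / p) + (x₃ + y₃) ^ (1 / p) := by
  have hp₀ : 0 < p := zero_lt_one.trans_le hp
  rw [one_div] at hx hy ⊢
  have hx' : x₁ ≤ (x₂ ^ p⁻¹ + x₃ ^ p⁻¹) ^ p := (rpow_inv_le_iff_of_pos hx₁ (by positivity) hp₀).1 hx
  have hy' : y₁ ≤ (y₂ ^ p⁻¹ + y₃ ^ p⁻¹) ^ p := (rpow_inv_le_iff_of_pos hy₁ (by positivity) hp₀).1 hy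
  have hroot : ∀ {z : ℝ}, 0 ≤ z → (z ^ p⁻¹) ^ p = z := fun hz => rpow_inv_rpow hz hp₀.ne'
  calc (x₁ + y₁) ^ p⁻¹
      ≤ ((x₂ ^ p⁻¹ + x₃ ^ p⁻¹) ^ p + (y₂ ^ p⁻¹ + y₃ ^ p⁻¹) ^ p) ^ p⁻¹ :=
        rpow_le_rpow (by positivity) (add_le_add hx' hy') (by positivity)
    _ ≤ ((x₂ ^ p⁻¹) ^ p + (y₂ ^ p⁻¹) ^ p) ^ p⁻¹ + ((x₃ ^ p⁻¹) ^ p + (y₃ ^ p⁻¹) ^ p) ^ p⁻¹ := by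
        simpa only [one_div] using Lp_add_le_pair hp (by positivity) (by positivity)
          (by positivity) (by positivity)
    _ = (x₂ + y₂) ^ p⁻¹ + (x₃ + y₃) ^ p⁻¹ := by
        rw [hroot hx₂, hroot hx₃, hroot hy₂, hroot hy₃]

theorem smul_mem_Omega3 {p k : ℝ} (hk : 0 ≤ k) {x : ℝ × ℝ × ℝ} (hx : x ∈ Omega3 p) :
    k • x ∈ Omega3 p := by
  obtain ⟨h₁, h₂, h₃, h₁₂₃, h₂₁₃, h₃₁₂⟩ := hx
  exact ⟨mul_nonneg hk h₁, mul_nonneg hk h₂, mul_nonneg hk h₃,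
    rpow_triangle_smul hk h₁ h₂ h₃ h₁₂₃, rpow_triangle_smul hk h₂ h₁ h₃ h₂₁₃,
    rpow_triangle_smul hk h₃ h₁ h₂ h₃₁₂⟩

theorem add_mem_Omega3 {p : ℝ} (hp : 1 ≤ p) {x y : ℝ × ℝ × ℝ}
    (hx : x ∈ Omega3 p) (hy : y ∈ Omega3 p) : x + y ∈ Omega3 p := by
  obtain ⟨h₁, h₂, h₃, h₁₂₃, h₂₁₃, h₃₁₂⟩ := hx
  obtain ⟨g₁, g₂, g₃, g₁₂₃, g₂₁₃, g₃₁₂⟩ := hy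
  exact ⟨add_nonneg h₁ g₁, add_nonneg h₂ g₂, add_nonneg h₃ g₃,
    rpow_triangle_add hp h₁ h₂ h₃ g₁ g₂ g₃ h₁₂₃ g₁₂₃,
    rpow_triangle_add hp h₂ h₁ h₃ g₂ g₁ g₃ h₂₁₃ g₂₁₃,
    rpow_triangle_add hp h₃ h₁ h₂ g₃ g₁ g₂ h₃₁₂ g₃₁₂⟩

theorem Omega3_convex_cone (p : ℝ) (hp1 : 1 < p) :
    (∀ x ∈ Omega3 p, ∀ k : ℝ, 0 ≤ k → k • x ∈ Omega3 p) ∧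
    (∀ x ∈ Omega3 p, ∀ y ∈ Omega3 p, x + y ∈ Omega3 p) :=
  ⟨fun _ hx _ hk => smul_mem_Omega3 hk hx, fun _ hx _ hy => add_mem_Omega3 hp1.le hx hy⟩
end

section
/- Let p ∈ (1, ∞). For x = (x₁, x₂, x₃) ∈ ℝ³, the set T(x) = {(φ, ψ) ∈ L^p([0,1])² : ‖φ‖^p = x₁, ‖ψ‖^p = x₂, ‖φ-ψ‖^p = x₃} is nonempty if and only if x₁, x₂, x₃ ≥ 0 and the triple (x₁^(1/p), x₂^(1/p), x₃^(1/p)) satisfies the triangle inequality. -/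
/-!
The triangle inequality for the `L^p` norm gives one direction. Conversely, given `a, b, c ≥ 0`
with `|a - b| ≤ c ≤ a + b`, take `φ ≡ a` and `ψ` equal to `-b` on a set `S` and to `b` off it.
Then `‖φ‖ = a`, `‖ψ‖ = b` and `‖φ - ψ‖ ^ p = μ S * (a + b) ^ p + (1 - μ S) * |a - b| ^ p`,
which sweeps out `[|a - b| ^ p, (a + b) ^ p] ∋ c ^ p` as `μ S` ranges over `[0, 1]`.
-/

open MeasureTheory Set
open scoped ENNReal

section PiecewiseConst

variable {α : Type*} [MeasurableSpace α] {μ : Measure α} [IsFiniteMeasure μ]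
  {S : Set α} [DecidablePred (· ∈ S)]

lemma memLp_piecewise_const (hS : MeasurableSet S) (s₁ s₂ : ℝ) (q : ℝ≥0∞) :
    MemLp (S.piecewise (fun _ ↦ s₁) fun _ ↦ s₂) q μ :=
  (memLp_const s₁).piecewise hS (memLp_const s₂)

lemma norm_toLp_piecewise_const_rpow {p : ℝ} (hp : 0 < p) (hS : MeasurableSet S) (s₁ s₂ : ℝ) :
    ‖(memLp_piecewise_const (μ := μ) hS s₁ s₂ (ENNReal.ofReal p)).toLp _‖ ^ p =
      μ.real S * |s₁| ^ p + μ.real Sᶜ * |s₂| ^ p := by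
  have hp' : ENNReal.ofReal p ≠ 0 := by simpa using hp
  rw [Lp.norm_toLp, MemLp.eLpNorm_eq_integral_rpow_norm hp' ENNReal.ofReal_ne_top
    (memLp_piecewise_const hS s₁ s₂ _), ENNReal.toReal_ofReal hp.le]
  simp_rw [Set.apply_piecewise S _ _ (fun _ s ↦ ‖s‖ ^ p)]
  rw [integral_piecewise hS integrableOn_const integrableOn_const, setIntegral_const,
    setIntegral_const]
  have hsum : 0 ≤ μ.real S * |s₁| ^ p + μ.real Sᶜ * |s₂| ^ p := by positivity
  rw [ENNReal.toReal_ofReal (by simpa using Real.rpow_nonneg hsum _)]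
  simpa using Real.rpow_inv_rpow hsum hp.ne'

end PiecewiseConst

section ProbabilitySpace

variable {α : Type*} [MeasurableSpace α] {μ : Measure α} [IsProbabilityMeasure μ] {p : ℝ}

lemma exists_Lp_norm_eq_of_triangle (hμ : ∀ t ∈ Icc (0 : ℝ) 1, ∃ S, MeasurableSet S ∧ μ.real S = t)
    (hp : 0 < p) {a b c : ℝ} (hab : a ≤ b + c) (hba : b ≤ a + c) (hc : c ≤ a + b) :
    ∃ φ ψ : Lp ℝ (ENNReal.ofReal p) μ, ‖φ‖ = a ∧ ‖ψ‖ = b ∧ ‖φ - ψ‖ = c := by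
  classical
  have ha : 0 ≤ a := by linarith
  have hb : 0 ≤ b := by linarith
  have hc₀ : 0 ≤ c := by linarith
  have habs : |a - b| ≤ c := abs_sub_le_iff.2 ⟨by linarith, by linarith⟩
  have hmem : c ^ p ∈ segment ℝ (|a - b| ^ p) ((a + b) ^ p) := by
    rw [segment_eq_Icc (by gcongr; linarith)]
    exact ⟨by gcongr, by gcongr⟩
  obtain ⟨θ', θ, hθ', hθ, hsum, hcomb⟩ := hmem
  obtain ⟨S, hS, hμS⟩ := hμ θ ⟨hθ, by linarith⟩
  have hμSc : μ.real Sᶜ = θ' := by rw [probReal_compl_eq_one_sub hS]; linarith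
  have norm_eq {s₁ s₂ r : ℝ} (hr : 0 ≤ r) (h : θ * |s₁| ^ p + θ' * |s₂| ^ p = r ^ p) :
      ‖(memLp_piecewise_const (μ := μ) hS s₁ s₂ (ENNReal.ofReal p)).toLp _‖ = r :=
    -- for `p < 1` the `Lp` norm is not a group norm, but it is still `toReal` of `eLpNorm`
    (Real.rpow_left_inj ENNReal.toReal_nonneg hr hp.ne').1 <|
      (norm_toLp_piecewise_const_rpow hp hS s₁ s₂).trans (by rw [hμS, hμSc, h])
  refine ⟨(memLp_piecewise_const hS a a _).toLp _, (memLp_piecewise_const hS (-b) b _).toLp _,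
    norm_eq ha ?_, norm_eq hb ?_, ?_⟩
  · rw [abs_of_nonneg ha]; linear_combination a ^ p * hsum
  · rw [abs_neg, abs_of_nonneg hb]; linear_combination b ^ p * hsum
  · have hdiff : (S.piecewise (fun _ ↦ a) fun _ ↦ a) - (S.piecewise (fun _ ↦ -b) fun _ ↦ b) =
        S.piecewise (fun _ ↦ a + b) fun _ ↦ a - b := by
      rw [← Set.piecewise_sub]; simp only [Pi.sub_def, sub_neg_eq_add]
    rw [← MemLp.toLp_sub, MemLp.toLp_congr _ (memLp_piecewise_const hS _ _ _) (.of_eq hdiff)]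
    refine norm_eq hc₀ ?_
    rw [abs_of_nonneg (by linarith : 0 ≤ a + b), ← hcomb, smul_eq_mul, smul_eq_mul]; ring

lemma exists_Lp_norm_eq_iff_triangle
    (hμ : ∀ t ∈ Icc (0 : ℝ) 1, ∃ S, MeasurableSet S ∧ μ.real S = t) (hp : 1 ≤ p) {a b c : ℝ} :
    (∃ φ ψ : Lp ℝ (ENNReal.ofReal p) μ, ‖φ‖ = a ∧ ‖ψ‖ = b ∧ ‖φ - ψ‖ = c) ↔
      a ≤ b + c ∧ b ≤ a + c ∧ c ≤ a + b := by
  have : Fact (1 ≤ ENNReal.ofReal p) := ⟨by simpa using ENNReal.ofReal_le_ofReal hp⟩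
  constructor
  · rintro ⟨φ, ψ, rfl, rfl, rfl⟩
    exact ⟨norm_le_insert' φ ψ, norm_le_insert φ ψ, norm_sub_le φ ψ⟩
  · rintro ⟨hab, hba, hc⟩
    exact exists_Lp_norm_eq_of_triangle hμ (by linarith) hab hba hc

end ProbabilitySpace

lemma unitInterval.exists_measurableSet_measureReal_eq (t : ℝ) (ht : t ∈ Icc (0 : ℝ) 1) :
    ∃ S : Set unitInterval, MeasurableSet S ∧ volume.real S = t :=
  ⟨Iic ⟨t, ht⟩, measurableSet_Iic, by
    rw [measureReal_def, unitInterval.volume_Iic, ENNReal.toReal_ofReal ht.1]⟩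

theorem T_nonempty_iff (p : ℝ) (hp1 : 1 < p) (x₁ x₂ x₃ : ℝ) :
    (∃ φ ψ : Lp ℝ (ENNReal.ofReal p) (volume : Measure (Set.Icc (0 : ℝ) 1)),
        ‖φ‖ ^ p = x₁ ∧ ‖ψ‖ ^ p = x₂ ∧ ‖φ - ψ‖ ^ p = x₃) ↔
      (0 ≤ x₁ ∧ 0 ≤ x₂ ∧ 0 ≤ x₃ ∧
        x₁ ^ (1 / p) ≤ x₂ ^ (1 / p) + x₃ ^ (1 / p) ∧
        x₂ ^ (1 / p) ≤ x₁ ^ (1 / p) + x₃ ^ (1 / p) ∧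
        x₃ ^ (1 / p) ≤ x₁ ^ (1 / p) + x₂ ^ (1 / p)) := by
  have : Fact (1 ≤ ENNReal.ofReal p) := ⟨by simpa using ENNReal.ofReal_le_ofReal hp1.le⟩
  have hp : p ≠ 0 := by positivity
  have triangle {a b c : ℝ} := exists_Lp_norm_eq_iff_triangle (a := a) (b := b) (c := c)
    unitInterval.exists_measurableSet_measureReal_eq hp1.le
  simp only [one_div]
  constructor
  · rintro ⟨φ, ψ, rfl, rfl, rfl⟩
    simp only [Real.rpow_rpow_inv (norm_nonneg _) hp]
    exact ⟨by positivity, by positivity, by positivity, triangle.1 ⟨φ, ψ, rfl, rfl, rfl⟩⟩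
  · rintro ⟨h₁, h₂, h₃, htriangle⟩
    obtain ⟨φ, ψ, hφ, hψ, hφψ⟩ := triangle.2 htriangle
    exact ⟨φ, ψ, by rw [hφ, Real.rpow_inv_rpow h₁ hp], by rw [hψ, Real.rpow_inv_rpow h₂ hp],
      by rw [hφψ, Real.rpow_inv_rpow h₃ hp]⟩
end

section
/- Let p ∈ (1, ∞) and define B₃(x) = sup{‖φ+ψ‖^p : (φ,ψ) ∈ T(x)} on Ω₃, where T(x) = {(φ,ψ) ∈ L^p([0,1])² : ‖φ‖^p = x₁, ‖ψ‖^p = x₂, ‖φ-ψ‖^p = x₃}. Then B₃ is concave on Ω₃. -/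
open MeasureTheory

/-- The Bellman function `B₃`. -/
noncomputable def bellman3 (p : ℝ) (x : ℝ × ℝ × ℝ) : ℝ :=
  sSup {y : ℝ | ∃ φ ψ : Lp ℝ (ENNReal.ofReal p) (volume : Measure (Set.Icc (0 : ℝ) 1)),
    ‖φ‖ ^ p = x.1 ∧ ‖ψ‖ ^ p = x.2.1 ∧ ‖φ - ψ‖ ^ p = x.2.2 ∧ y = ‖φ + ψ‖ ^ p}

/-!
Concatenation: if `(φ₁, ψ₁)` realizes `x` and `(φ₂, ψ₂)` realizes `y`, compress the first pair
onto `[0, a]` and the second onto `[a, 1]`. The `p`-th powers of the norms of the glued functions,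
and of their sum and difference, are the `a, 1 - a` averages of those of the two pairs, so the
glued pair realizes `a x + (1 - a) y` with value `a ‖φ₁ + ψ₁‖ᵖ + (1 - a) ‖φ₂ + ψ₂‖ᵖ`. Hence the
set of realizable `x` is convex and `B₃` is concave on it. This set is `Ω₃`: the triangle
inequality in `Lᵖ` gives one inclusion, and for the other, a point of `Ω₃` lies on a segment
whose endpoints are realized by pairs of constants `(s₁, s₁ ∓ s₃)`, `sᵢ = xᵢ^(1/p)`.
-/

open Set
open scoped unitInterval Pointwise

lemma Real.volume_preimage_sub_div {d c : ℝ} (hc : 0 < c) (A : Set ℝ) :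
    volume ((fun x => (x - d) / c) ⁻¹' A) = ENNReal.ofReal c * volume A := by
  have : (fun x : ℝ => (x - d) / c) ⁻¹' A = (· + -d) ⁻¹' ((· * c⁻¹) ⁻¹' A) := by
    ext x; simp [div_eq_mul_inv, sub_eq_add_neg]
  rw [this, measure_preimage_add_right, Real.volume_preimage_mul_right (inv_ne_zero hc.ne'),
    inv_inv, abs_of_pos hc]

lemma MeasureTheory.Lp.norm_rpow_eq_integral_s13 {α E : Type*} [MeasurableSpace α] {μ : Measure α}
    [NormedAddCommGroup E] {p : ℝ} (hp : 0 < p) (φ : Lp E (ENNReal.ofReal p) μ) :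
    ‖φ‖ ^ p = ∫ t, ‖φ t‖ ^ p ∂μ := by
  rw [Lp.norm_def, toReal_eLpNorm (Lp.aestronglyMeasurable φ),
    lpNorm_eq_integral_norm_rpow_toReal (by simpa using hp) ENNReal.ofReal_ne_top
      (Lp.aestronglyMeasurable φ), ENNReal.toReal_ofReal hp.le,
    Real.rpow_inv_rpow (integral_nonneg fun _ => by positivity) hp.ne']

namespace unitInterval

noncomputable def stretch (d c : ℝ) (t : I) : I := projIcc 0 1 zero_le_one ((t - d) / c)

lemma measurable_stretch (d c : ℝ) : Measurable (stretch d c) :=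
  continuous_projIcc.measurable.comp ((measurable_subtype_coe.sub_const d).div_const c)

lemma coe_stretch_of_mem {d c : ℝ} {t : I} (ht : (t - d) / c ∈ I) :
    (stretch d c t : ℝ) = (t - d) / c :=
  congrArg Subtype.val (projIcc_of_mem zero_le_one ht)

lemma image_coe_stretch_preimage_inter {d c : ℝ} (hd : 0 ≤ d) (hc : 0 < c) (hdc : d + c ≤ 1)
    (s : Set I) :
    ((↑) : I → ℝ) '' (stretch d c ⁻¹' s ∩ {t | (t : ℝ) ∈ Icc d (d + c)}) =
      (fun x => (x - d) / c) ⁻¹' ((↑) '' s) := by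
  ext x
  constructor
  · rintro ⟨t, ⟨hts, htd, htdc⟩, rfl⟩
    have hmem : ((t : ℝ) - d) / c ∈ I :=
      ⟨div_nonneg (by linarith) hc.le, (div_le_one hc).2 (by linarith)⟩
    exact ⟨stretch d c t, hts, coe_stretch_of_mem hmem⟩
  · rintro ⟨u, hu, hux⟩
    replace hux : (x - d) / c = u := hux.symm
    obtain ⟨hu₀, hu₁⟩ := u.2
    have hx : x = d + c * u := by rw [← hux]; field_simp; ring
    have hxd : x ∈ Icc d (d + c) := ⟨by nlinarith, by nlinarith⟩
    have hxI : x ∈ I := ⟨by linarith [hxd.1], by linarith [hxd.2]⟩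
    have hstretch : stretch d c ⟨x, hxI⟩ = u :=
      Subtype.ext ((coe_stretch_of_mem (hux ▸ u.2)).trans hux)
    exact ⟨⟨x, hxI⟩, ⟨by rwa [mem_preimage, hstretch], hxd⟩, rfl⟩

lemma measurePreserving_stretch {d c : ℝ} (hd : 0 ≤ d) (hc : 0 ≤ c) (hdc : d + c ≤ 1) :
    MeasurePreserving (stretch d c) (volume.restrict {t | (t : ℝ) ∈ Icc d (d + c)})
      (ENNReal.ofReal c • volume) := by
  refine ⟨measurable_stretch d c, ?_⟩
  rcases hc.eq_or_lt with rfl | hc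
  · have hnull : volume {t : I | (t : ℝ) ∈ Icc d (d + 0)} = 0 := by
      rw [volume_apply]
      refine measure_mono_null ?_ (Real.volume_singleton (a := d))
      rintro _ ⟨t, ht, rfl⟩
      simpa using ht
    rw [Measure.restrict_eq_zero.2 hnull]
    simp
  have hS : MeasurableSet {t : I | (t : ℝ) ∈ Icc d (d + c)} :=
    measurableSet_Icc.preimage measurable_subtype_coe
  ext s hs
  rw [Measure.map_apply (measurable_stretch d c) hs, Measure.restrict_apply' hS, volume_apply,
    image_coe_stretch_preimage_inter hd hc hdc, Real.volume_preimage_sub_div hc,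
    Measure.smul_apply, volume_apply, smul_eq_mul]

variable {E : Type*} {a : ℝ}

noncomputable def concat (a : ℝ) (f g : I → E) : I → E :=
  {t : I | (t : ℝ) ≤ a}.piecewise (f ∘ stretch 0 a) (g ∘ stretch a (1 - a))

lemma concat_add [Add E] (f₁ f₂ g₁ g₂ : I → E) :
    concat a (f₁ + f₂) (g₁ + g₂) = concat a f₁ g₁ + concat a f₂ g₂ :=
  Set.piecewise_add _ _ _ _ _

lemma apply_concat {F : Type*} (h : E → F) (f g : I → E) (t : I) :
    h (concat a f g t) = concat a (fun s => h (f s)) (fun s => h (g s)) t :=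
  Set.apply_piecewise _ _ _ (fun _ => h)

lemma measurableSet_coe_le (a : ℝ) : MeasurableSet {t : I | (t : ℝ) ≤ a} :=
  measurableSet_le measurable_subtype_coe measurable_const

lemma measurePreserving_stretch_left (ha₀ : 0 ≤ a) (ha₁ : a ≤ 1) :
    MeasurePreserving (stretch 0 a) (volume.restrict {t : I | (t : ℝ) ≤ a})
      (ENNReal.ofReal a • volume) := by
  have hS : {t : I | (t : ℝ) ≤ a} = {t : I | (t : ℝ) ∈ Icc 0 (0 + a)} := by
    ext t; simp [t.2.1]
  rw [hS]
  exact measurePreserving_stretch le_rfl ha₀ (by linarith)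

lemma measurePreserving_stretch_right (ha₀ : 0 ≤ a) (ha₁ : a ≤ 1) :
    MeasurePreserving (stretch a (1 - a)) (volume.restrict {t : I | (t : ℝ) ≤ a}ᶜ)
      (ENNReal.ofReal (1 - a) • volume) := by
  have hS : ({t : I | (t : ℝ) ≤ a}ᶜ : Set I) =ᵐ[volume]
      {t : I | (t : ℝ) ∈ Icc a (a + (1 - a))} := by
    have e₁ : {t : I | (t : ℝ) ≤ a}ᶜ = (↑) ⁻¹' Ioi a := by ext; simp
    have e₂ : {t : I | (t : ℝ) ∈ Icc a (a + (1 - a))} = (↑) ⁻¹' Ici a := by ext t; simp [t.2.2]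
    rw [e₁, e₂]
    exact measurePreserving_coe.quasiMeasurePreserving.preimage_ae_eq Ioi_ae_eq_Ici
  rw [Measure.restrict_congr_set hS]
  exact measurePreserving_stretch ha₀ (by linarith) (by linarith)

lemma concat_ae_eq (ha₀ : 0 ≤ a) (ha₁ : a ≤ 1) {f f' g g' : I → E} (hf : f =ᵐ[volume] f')
    (hg : g =ᵐ[volume] g') : concat a f g =ᵐ[volume] concat a f' g' := by
  have hS := measurableSet_coe_le a
  rw [Filter.EventuallyEq, ← Measure.restrict_add_restrict_compl (μ := volume) hS,
    ae_add_measure_iff]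
  exact ⟨(piecewise_ae_eq_restrict hS).trans <|
      ((measurePreserving_stretch_left ha₀ ha₁).quasiMeasurePreserving.ae_eq_comp
        (Measure.ae_smul_measure hf _)).trans (piecewise_ae_eq_restrict hS).symm,
    (piecewise_ae_eq_restrict_compl hS).trans <|
      ((measurePreserving_stretch_right ha₀ ha₁).quasiMeasurePreserving.ae_eq_comp
        (Measure.ae_smul_measure hg _)).trans (piecewise_ae_eq_restrict_compl hS).symm⟩

lemma memLp_concat [NormedAddCommGroup E] {q : ENNReal} (ha₀ : 0 ≤ a) (ha₁ : a ≤ 1)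
    {f g : I → E} (hf : MemLp f q volume) (hg : MemLp g q volume) :
    MemLp (concat a f g) q volume :=
  MemLp.piecewise (measurableSet_coe_le a)
    ((hf.smul_measure ENNReal.ofReal_ne_top).comp_measurePreserving
      (measurePreserving_stretch_left ha₀ ha₁))
    ((hg.smul_measure ENNReal.ofReal_ne_top).comp_measurePreserving
      (measurePreserving_stretch_right ha₀ ha₁))

lemma integral_concat [NormedAddCommGroup E] [NormedSpace ℝ E] (ha₀ : 0 ≤ a) (ha₁ : a ≤ 1)
    {f g : I → E} (hf : Integrable f volume) (hg : Integrable g volume) :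
    ∫ t, concat a f g t = a • (∫ t, f t) + (1 - a) • ∫ t, g t := by
  have hl := measurePreserving_stretch_left ha₀ ha₁
  have hr := measurePreserving_stretch_right ha₀ ha₁
  have hf' := hf.1.smul_measure (ENNReal.ofReal a)
  have hg' := hg.1.smul_measure (ENNReal.ofReal (1 - a))
  rw [concat, integral_piecewise (measurableSet_coe_le a)
    ((hl.integrable_comp hf').2 (hf.smul_measure ENNReal.ofReal_ne_top))
    ((hr.integrable_comp hg').2 (hg.smul_measure ENNReal.ofReal_ne_top))]
  simp only [Function.comp_apply]
  rw [← integral_map hl.aemeasurable (hl.map_eq ▸ hf'),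
    ← integral_map hr.aemeasurable (hr.map_eq ▸ hg'), hl.map_eq, hr.map_eq,
    integral_smul_measure, integral_smul_measure, ENNReal.toReal_ofReal ha₀,
    ENNReal.toReal_ofReal (by linarith)]

variable [NormedAddCommGroup E]

noncomputable def concatLp {q : ENNReal} (a : I) :
    Lp E q (volume : Measure I) × Lp E q (volume : Measure I) →+ Lp E q (volume : Measure I) :=
  AddMonoidHom.mk'
    (fun φψ => (memLp_concat a.2.1 a.2.2 (Lp.memLp φψ.1) (Lp.memLp φψ.2)).toLp _)
    fun φ ψ => by
      simp only [Prod.fst_add, Prod.snd_add, ← MemLp.toLp_add]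
      refine MemLp.toLp_congr _ _ ?_
      rw [← concat_add]
      exact concat_ae_eq a.2.1 a.2.2 (Lp.coeFn_add _ _) (Lp.coeFn_add _ _)

lemma coeFn_concatLp {q : ENNReal} (a : I) (φ ψ : Lp E q (volume : Measure I)) :
    concatLp a (φ, ψ) =ᵐ[volume] concat a φ ψ :=
  MemLp.coeFn_toLp (memLp_concat a.2.1 a.2.2 (Lp.memLp φ) (Lp.memLp ψ))

lemma norm_concatLp_rpow {p : ℝ} (hp : 0 < p) (a : I)
    (φ ψ : Lp E (ENNReal.ofReal p) (volume : Measure I)) :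
    ‖concatLp a (φ, ψ)‖ ^ p = a * ‖φ‖ ^ p + (1 - a) * ‖ψ‖ ^ p := by
  have hint (χ : Lp E (ENNReal.ofReal p) (volume : Measure I)) :
      Integrable (fun t => ‖χ t‖ ^ p) volume := by
    simpa [ENNReal.toReal_ofReal hp.le] using
      (Lp.memLp χ).integrable_norm_rpow (by simpa using hp) ENNReal.ofReal_ne_top
  rw [Lp.norm_rpow_eq_integral_s13 hp, Lp.norm_rpow_eq_integral_s13 hp, Lp.norm_rpow_eq_integral_s13 hp,
    ← smul_eq_mul, ← smul_eq_mul, ← integral_concat a.2.1 a.2.2 (hint φ) (hint ψ)]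
  refine integral_congr_ae ?_
  filter_upwards [coeFn_concatLp a φ ψ] with t ht
  rw [ht, apply_concat (‖·‖ ^ p)]

end unitInterval

open unitInterval

def bellman3Values (p : ℝ) (x : ℝ × ℝ × ℝ) : Set ℝ :=
  {y : ℝ | ∃ φ ψ : Lp ℝ (ENNReal.ofReal p) (volume : Measure I),
    ‖φ‖ ^ p = x.1 ∧ ‖ψ‖ ^ p = x.2.1 ∧ ‖φ - ψ‖ ^ p = x.2.2 ∧ y = ‖φ + ψ‖ ^ p}

lemma bellman3_eq_sSup (p : ℝ) (x : ℝ × ℝ × ℝ) :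
    bellman3 p x = sSup (bellman3Values p x) := rfl

variable {p : ℝ}

lemma smul_add_smul_subset_bellman3Values (hp : 0 < p) {x y : ℝ × ℝ × ℝ} {a b : ℝ}
    (ha : 0 ≤ a) (hb : 0 ≤ b) (hab : a + b = 1) :
    a • bellman3Values p x + b • bellman3Values p y ⊆ bellman3Values p (a • x + b • y) := by
  rintro _ ⟨_, ⟨_, ⟨φ₁, ψ₁, hx₁, hx₂, hx₃, rfl⟩, rfl⟩, _, ⟨_, ⟨φ₂, ψ₂, hy₁, hy₂, hy₃, rfl⟩, rfl⟩,
    rfl⟩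
  obtain rfl : b = 1 - a := by linarith
  set t : I := ⟨a, ha, by linarith⟩
  refine ⟨concatLp t (φ₁, φ₂), concatLp t (ψ₁, ψ₂), ?_, ?_, ?_, ?_⟩ <;>
    simp only [← map_sub, ← map_add, Prod.mk_sub_mk, Prod.mk_add_mk, norm_concatLp_rpow hp,
      hx₁, hx₂, hx₃, hy₁, hy₂, hy₃] <;>
    simp [t]

lemma convex_setOf_bellman3Values_nonempty (hp : 0 < p) :
    Convex ℝ {x | (bellman3Values p x).Nonempty} :=
  fun _ hx _ hy _ _ ha hb hab =>
    (hx.smul_set.add hy.smul_set).mono (smul_add_smul_subset_bellman3Values hp ha hb hab)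

lemma bellman3Values_const_nonempty (hp : 0 < p) (c₁ c₂ : ℝ) :
    (bellman3Values p (|c₁| ^ p, |c₂| ^ p, |c₁ - c₂| ^ p)).Nonempty := by
  have hnorm (c : ℝ) : ‖Lp.const (ENNReal.ofReal p) (volume : Measure I) c‖ = |c| := by
    simp [Lp.norm_const _ _ c (ENNReal.ofReal_ne_zero_iff.2 hp)]
  exact ⟨_, Lp.const _ _ c₁, Lp.const _ _ c₂, by rw [hnorm], by rw [hnorm],
    by rw [← map_sub, hnorm], rfl⟩

lemma bellman3Values_nonempty_of_mem_Omega3 (hp : 0 < p) {x : ℝ × ℝ × ℝ} (hx : x ∈ Omega3 p) :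
    (bellman3Values p x).Nonempty := by
  obtain ⟨x₁, x₂, x₃⟩ := x
  obtain ⟨h₁, h₂, h₃, h₁₂₃, h₂₁₃, h₃₁₂⟩ := hx
  dsimp only at *
  set s₁ := x₁ ^ (1 / p)
  set s₃ := x₃ ^ (1 / p)
  have root (z : ℝ) (hz : 0 ≤ z) : (z ^ (1 / p)) ^ p = z := by
    rw [one_div, Real.rpow_inv_rpow hz hp.ne']
  have hs₁ : 0 ≤ s₁ := by positivity
  have hs₃ : 0 ≤ s₃ := by positivity
  have hs₁p : s₁ ^ p = x₁ := root x₁ h₁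
  have hs₃p : s₃ ^ p = x₃ := root x₃ h₃
  have hlow : |s₁ - s₃| ^ p ≤ x₂ := root x₂ h₂ ▸
    Real.rpow_le_rpow (abs_nonneg _) (abs_sub_le_iff.2 ⟨by linarith, by linarith⟩) hp.le
  have hup : x₂ ≤ (s₁ + s₃) ^ p := root x₂ h₂ ▸ Real.rpow_le_rpow (by positivity) h₂₁₃ hp.le
  obtain ⟨a, b, ha, hb, hab, hx₂⟩ : x₂ ∈ segment ℝ (|s₁ - s₃| ^ p) (|s₁ + s₃| ^ p) := by
    rw [abs_of_nonneg (add_nonneg hs₁ hs₃), segment_eq_Icc (hlow.trans hup)]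
    exact ⟨hlow, hup⟩
  refine (convex_setOf_bellman3Values_nonempty hp).segment_subset
    (bellman3Values_const_nonempty hp s₁ (s₁ - s₃)) (bellman3Values_const_nonempty hp s₁ (s₁ + s₃))
    ⟨a, b, ha, hb, hab, ?_⟩
  simp only [smul_eq_mul] at hx₂
  simp only [sub_sub_cancel, sub_add_cancel_left, abs_neg, abs_of_nonneg hs₁, abs_of_nonneg hs₃,
    hs₁p, hs₃p, Prod.smul_mk, Prod.mk_add_mk, smul_eq_mul, ← add_mul, hab, one_mul,
    hx₂]

lemma mem_Omega3_of_bellman3Values_nonempty (hp : 1 ≤ p) {x : ℝ × ℝ × ℝ}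
    (hx : (bellman3Values p x).Nonempty) : x ∈ Omega3 p := by
  have : Fact (1 ≤ ENNReal.ofReal p) := ⟨ENNReal.one_le_ofReal.2 hp⟩
  obtain ⟨_, φ, ψ, h₁, h₂, h₃, -⟩ := hx
  have root (r : ℝ) (hr : 0 ≤ r) : (r ^ p) ^ (1 / p) = r := by
    rw [one_div, Real.rpow_rpow_inv hr (by positivity)]
  simp only [Omega3, Set.mem_ofPred_eq, ← h₁, ← h₂, ← h₃, root _ (norm_nonneg _)]
  exact ⟨by positivity, by positivity, by positivity, norm_le_insert' φ ψ, norm_le_insert φ ψ,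
    norm_sub_le φ ψ⟩

lemma Omega3_eq_setOf_bellman3Values_nonempty (hp : 1 ≤ p) :
    Omega3 p = {x | (bellman3Values p x).Nonempty} :=
  Set.ext fun _ => ⟨bellman3Values_nonempty_of_mem_Omega3 (by linarith),
    mem_Omega3_of_bellman3Values_nonempty hp⟩

lemma bddAbove_bellman3Values (hp : 1 ≤ p) (x : ℝ × ℝ × ℝ) : BddAbove (bellman3Values p x) := by
  have : Fact (1 ≤ ENNReal.ofReal p) := ⟨ENNReal.one_le_ofReal.2 hp⟩
  refine ⟨(x.1 ^ (1 / p) + x.2.1 ^ (1 / p)) ^ p, ?_⟩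
  rintro _ ⟨φ, ψ, h₁, h₂, -, rfl⟩
  have root (r : ℝ) (hr : 0 ≤ r) : (r ^ p) ^ (1 / p) = r := by
    rw [one_div, Real.rpow_rpow_inv hr (by positivity)]
  rw [← h₁, ← h₂, root _ (norm_nonneg _), root _ (norm_nonneg _)]
  exact Real.rpow_le_rpow (norm_nonneg _) (norm_add_le φ ψ) (by positivity)

theorem bellman3_concave (p : ℝ) (hp1 : 1 < p) :
    ConcaveOn ℝ (Omega3 p) (bellman3 p) := by
  have hp : 0 < p := zero_lt_one.trans hp1
  rw [Omega3_eq_setOf_bellman3Values_nonempty hp1.le]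
  refine ⟨convex_setOf_bellman3Values_nonempty hp, fun x hx y hy a b ha hb hab => ?_⟩
  have hbdd := bddAbove_bellman3Values hp1.le
  rw [bellman3_eq_sSup, bellman3_eq_sSup, bellman3_eq_sSup, ← Real.sSup_smul_of_nonneg ha,
    ← Real.sSup_smul_of_nonneg hb, ← csSup_add hx.smul_set ((hbdd x).smul_of_nonneg ha)
      hy.smul_set ((hbdd y).smul_of_nonneg hb)]
  exact csSup_le_csSup (hbdd _) (hx.smul_set.add hy.smul_set)
    (smul_add_smul_subset_bellman3Values hp ha hb hab)
end

section
/- Let ω ⊂ ℝ^d be a compact strictly convex set with nonempty interior, f : ∂ω → ℝ continuous, and 𝔅 the minimal concave function on ω majorizing f on ∂ω. Then for every x₀ ∈ ω there exist k ≤ d+1 points x₁, …, x_k ∈ ∂ω such that x₀ ∈ conv(x₁, …, x_k), 𝔅(x_i) = f(x_i) for each i, and 𝔅 is affine on conv(x₁, …, x_k). -/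
/-!
The graph of `f` over `∂ω` has a compact convex hull `K`, whose upper envelope is concave on
`ω = conv ∂ω` and majorizes `f`; by minimality `(x₀, 𝔅 x₀)` is the top point of `K` above `x₀`.
Carathéodory writes it as a positive combination of affinely independent points `(xᵢ, f xᵢ)`,
and the `xᵢ` are themselves affinely independent: moving the weights along an affine relation
among them would reach a higher point of `K` above `x₀`. Jensen's inequality then forces
`𝔅 xᵢ = f xᵢ`. Finally the affine interpolation `g` of these values satisfies `g ≤ 𝔅` on the
simplex `conv {xᵢ}` by concavity, with equality at its relative interior point `x₀`, and a concave
function touching an affine minorant at a relative interior point agrees with it on the simplex.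
-/

open Set Finset Filter Topology Module

section LinearAlgebra

variable {K V W ι : Type*} [Field K] [AddCommGroup V] [Module K V] [AddCommGroup W] [Module K W]

theorem LinearIndependent.exists_linearMap_eq {v : ι → V} (hv : LinearIndependent K v)
    (c : ι → W) : ∃ L : V →ₗ[K] W, ∀ i, L (v i) = c i := by
  obtain ⟨L, hL⟩ := LinearMap.exists_extend ((Basis.span hv).constr K c)
  refine ⟨L, fun i => ?_⟩
  have hvi : v i = (Submodule.span K (range v)).subtype (Basis.span hv i) := by
    simp [Basis.span_apply]
  rw [hvi, ← LinearMap.comp_apply, hL, Basis.constr_basis]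

theorem AffineIndependent.exists_affineMap_eq {p : ι → V} (hp : AffineIndependent K p)
    (c : ι → W) : ∃ g : V →ᵃ[K] W, ∀ i, g (p i) = c i := by
  rcases isEmpty_or_nonempty ι with hι | ⟨⟨i₀⟩⟩
  · exact ⟨AffineMap.const K V 0, isEmptyElim⟩
  obtain ⟨L, hL⟩ := ((affineIndependent_iff_linearIndependent_vsub K p i₀).1 hp)
    |>.exists_linearMap_eq fun i => c i - c i₀
  refine ⟨L.toAffineMap + AffineMap.const K V (c i₀ - L (p i₀)), fun i => ?_⟩
  rcases eq_or_ne i i₀ with rfl | hi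
  · simp
  · have h := hL ⟨i, hi⟩
    simp only [vsub_eq_sub, map_sub] at h
    rw [AffineMap.coe_add, Pi.add_apply, LinearMap.coe_toAffineMap, AffineMap.const_apply,
      ← add_sub_assoc, add_sub_right_comm, h, sub_add_cancel]

theorem AffineMap.map_sum_smul (g : V →ᵃ[K] W) {s : Finset ι} {w : ι → K}
    (hw : ∑ i ∈ s, w i = 1) (p : ι → V) : g (∑ i ∈ s, w i • p i) = ∑ i ∈ s, w i • g (p i) := by
  rw [← s.affineCombination_eq_linear_combination p w hw, s.map_affineCombination p w hw,
    s.affineCombination_eq_linear_combination _ w hw]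
  rfl

theorem AffineIndependent.le_finrank_succ [FiniteDimensional K V] {k : ℕ} {p : Fin k → V}
    (hp : AffineIndependent K p) : k ≤ finrank K V + 1 := by
  simpa using hp.card_le_finrank_succ.trans (Nat.add_le_add_right (Submodule.finrank_le _) 1)

end LinearAlgebra

section Caratheodory

variable {𝕜 E ι : Type*} [Field 𝕜] [LinearOrder 𝕜] [IsStrictOrderedRing 𝕜]
  [AddCommGroup E] [Module 𝕜 E]

theorem mem_convexHull_range_iff [Fintype ι] {z : ι → E} {x : E} :
    x ∈ convexHull 𝕜 (range z) ↔
      ∃ w : ι → 𝕜, (∀ i, 0 ≤ w i) ∧ ∑ i, w i = 1 ∧ ∑ i, w i • z i = x := by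
  classical
  have : range z = Fintype.linearCombination 𝕜 z '' range fun i => Pi.single i 1 := by
    rw [← range_comp]; congr 1; ext i; simp
  rw [this, ← LinearMap.image_convexHull, convexHull_rangle_single_eq_stdSimplex]
  simp [stdSimplex, Fintype.linearCombination_apply, and_assoc]

theorem exists_fin_pos_convex_span_of_mem_convexHull {s : Set E} {x : E}
    (hx : x ∈ convexHull 𝕜 s) :
    ∃ (k : ℕ) (z : Fin k → E) (w : Fin k → 𝕜), range z ⊆ s ∧ AffineIndependent 𝕜 z ∧
      (∀ i, 0 < w i) ∧ ∑ i, w i = 1 ∧ ∑ i, w i • z i = x := by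
  obtain ⟨ι, _, z, w, hzs, hz, hw₀, hw₁, hx⟩ := eq_pos_convex_span_of_mem_convexHull hx
  let e := (Fintype.equivFin ι).symm
  refine ⟨Fintype.card ι, z ∘ e, w ∘ e, by rwa [e.surjective.range_comp],
    hz.comp_embedding e.toEmbedding, fun i => hw₀ (e i), ?_, ?_⟩
  · rwa [Function.comp_def, e.sum_comp]
  · exact (e.sum_comp fun i => w i • z i).trans hx

end Caratheodory

theorem exists_pos_forall_pos_add_mul {ι : Type*} [Finite ι] {w : ι → ℝ} (hw : ∀ i, 0 < w i)
    (u : ι → ℝ) : ∃ ε > 0, ∀ i, 0 < w i + ε * u i := by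
  have hnhds : ∀ᶠ ε in 𝓝 (0 : ℝ), ∀ i, 0 < w i + ε * u i := eventually_all.2 fun i =>
    (((continuous_const.add (continuous_id.mul continuous_const)).tendsto' 0 (w i) (by simp))
      |>.eventually (lt_mem_nhds (hw i)))
  have hpos : ∀ᶠ ε in 𝓝[>] (0 : ℝ), 0 < ε := self_mem_nhdsWithin
  exact (hpos.and (hnhds.filter_mono nhdsWithin_le_nhds)).exists

section NormedSpace

variable {E : Type*} [NormedAddCommGroup E] [NormedSpace ℝ E]

theorem isCompact_convexHull [FiniteDimensional ℝ E] {s : Set E} (hs : IsCompact s) :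
    IsCompact (convexHull ℝ s) := by
  let combination (k : ℕ) (q : (Fin k → ℝ) × (Fin k → E)) : E := ∑ i, q.1 i • q.2 i
  have hunion : convexHull ℝ s = ⋃ k ∈ Finset.range (finrank ℝ E + 2),
      combination k '' (stdSimplex ℝ (Fin k) ×ˢ univ.pi fun _ => s) := by
    refine Subset.antisymm (fun x hx => ?_) ?_
    · obtain ⟨k, z, w, hzs, hz, hw₀, hw₁, rfl⟩ := exists_fin_pos_convex_span_of_mem_convexHull hx
      refine mem_biUnion (Finset.mem_range.2 (Nat.lt_succ_of_le hz.le_finrank_succ)) ?_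
      exact ⟨(w, z), ⟨⟨fun i => (hw₀ i).le, hw₁⟩, fun i _ => hzs (mem_range_self i)⟩, rfl⟩
    · simp only [Set.iUnion_subset_iff]
      rintro k - _ ⟨⟨w, z⟩, ⟨⟨hw₀, hw₁⟩, hz⟩, rfl⟩
      exact mem_convexHull_of_exists_fintype w z hw₀ hw₁ (fun i => hz i (mem_univ i)) rfl
  rw [hunion]
  exact Finset.isCompact_biUnion _ fun k _ =>
    ((isCompact_stdSimplex ℝ _).prod (isCompact_univ_pi fun _ => hs)).image (by fun_prop)

theorem IsCompact.mem_convexHull_frontier {s : Set E} (hs : IsCompact s) {x y : E}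
    (hx : x ∈ s) (hy : y ∈ frontier s) : x ∈ convexHull ℝ (frontier s) := by
  rcases eq_or_ne x y with rfl | hxy
  · exact subset_convexHull ℝ _ hy
  let ray (t : ℝ) : E := y + t • (x - y)
  have hray : IsClosedEmbedding ray :=
    (Homeomorph.addLeft y).isClosedEmbedding.comp (isClosedEmbedding_smul_left (sub_ne_zero.2 hxy))
  have h1 : (1 : ℝ) ∈ ray ⁻¹' s := by simpa [ray] using hx
  obtain ⟨b, hb, hbmax⟩ := (hray.isCompact_preimage hs).exists_isGreatest ⟨1, h1⟩
  have hzs : ray b ∈ frontier s := by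
    refine ⟨subset_closure hb, fun hint => ?_⟩
    have hnhds : ray ⁻¹' interior s ∈ 𝓝[>] b :=
      nhdsWithin_le_nhds <| (isOpen_interior.preimage hray.continuous).mem_nhds hint
    obtain ⟨t, htint, hbt⟩ := Filter.nonempty_of_mem (inter_mem hnhds self_mem_nhdsWithin)
    exact (hbmax (interior_subset (s := s) htint)).not_gt hbt
  have hb1 : 1 ≤ b := hbmax h1
  refine segment_subset_convexHull hy hzs ⟨1 - b⁻¹, b⁻¹,
    sub_nonneg.2 (inv_le_one_of_one_le₀ hb1), by positivity, by ring, ?_⟩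
  simp only [ray, smul_add, smul_smul, inv_mul_cancel₀ (by positivity : b ≠ 0)]
  module

end NormedSpace

section ConcaveOn

variable {E ι : Type*} [AddCommGroup E] [Module ℝ E] [Fintype ι] {s : Set E} {φ : E → ℝ}
  {x : ι → E} {w : ι → ℝ}

theorem ConcaveOn.eq_of_le_of_map_sum_le (hφ : ConcaveOn ℝ s φ) (hx : ∀ i, x i ∈ s)
    (hw₀ : ∀ i, 0 < w i) (hw₁ : ∑ i, w i = 1) {c : ι → ℝ} (hc : ∀ i, c i ≤ φ (x i))
    (hsum : φ (∑ i, w i • x i) ≤ ∑ i, w i * c i) (i : ι) : φ (x i) = c i := by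
  have hjensen := hφ.le_map_sum (fun i _ => (hw₀ i).le) hw₁ fun i _ => hx i
  have hle : ∀ i ∈ Finset.univ, w i * c i ≤ w i * φ (x i) := fun i _ =>
    mul_le_mul_of_nonneg_left (hc i) (hw₀ i).le
  have heq := (Finset.sum_eq_sum_iff_of_le hle).1
    (le_antisymm (Finset.sum_le_sum hle) (by simpa only [smul_eq_mul] using hjensen.trans hsum))
  exact (mul_left_cancel₀ (hw₀ i).ne' (heq i (mem_univ i))).symm

theorem ConcaveOn.exists_affineMap_eqOn_convexHull (hφ : ConcaveOn ℝ s φ) (hx : ∀ i, x i ∈ s)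
    (hxi : AffineIndependent ℝ x) (hw₀ : ∀ i, 0 < w i) (hw₁ : ∑ i, w i = 1)
    (hsum : φ (∑ i, w i • x i) ≤ ∑ i, w i * φ (x i)) :
    ∃ g : E →ᵃ[ℝ] ℝ, EqOn φ g (convexHull ℝ (range x)) := by
  obtain ⟨g, hg⟩ := hxi.exists_affineMap_eq fun i => φ (x i)
  have hg_sum : ∀ μ : ι → ℝ, ∑ i, μ i = 1 → g (∑ i, μ i • x i) = ∑ i, μ i * φ (x i) := by
    intro μ hμ
    simp only [g.map_sum_smul hμ, hg, smul_eq_mul]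
  have hhull : convexHull ℝ (range x) ⊆ s := convexHull_min (range_subset_iff.2 hx) hφ.1
  have hle : ∀ z ∈ convexHull ℝ (range x), g z ≤ φ z := by
    intro z hz
    obtain ⟨μ, hμ₀, hμ₁, rfl⟩ := mem_convexHull_range_iff.1 hz
    rw [hg_sum μ hμ₁]
    simpa only [smul_eq_mul] using hφ.le_map_sum (fun i _ => hμ₀ i) hμ₁ fun i _ => hx i
  refine ⟨g, fun z hz => le_antisymm ?_ (hle z hz)⟩
  set x₀ := ∑ i, w i • x i
  obtain ⟨μ, hμ₀, hμ₁, hμz⟩ := mem_convexHull_range_iff.1 hz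
  obtain ⟨δ, hδ, hδw⟩ := exists_pos_forall_pos_add_mul hw₀ (w - μ)
  set z' := x₀ + δ • (x₀ - z)
  have hz' : z' ∈ convexHull ℝ (range x) := by
    refine mem_convexHull_range_iff.2 ⟨w + δ • (w - μ), fun i => (hδw i).le, ?_, ?_⟩
    · simp [sum_add_distrib, ← mul_sum, hw₁, hμ₁]
    · simp [add_smul, sub_smul, mul_smul, sum_add_distrib, ← smul_sum, hμz, x₀, z']
  have hδ₁ : (0 : ℝ) < 1 + δ := by linarith
  have hab : δ / (1 + δ) + 1 / (1 + δ) = 1 := by rw [← add_div, add_comm, div_self hδ₁.ne']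
  have hcomb : (δ / (1 + δ)) • z + (1 / (1 + δ)) • z' = x₀ := by
    rw [div_eq_inv_mul, one_div, ← smul_smul, ← smul_add, inv_smul_eq_iff₀ hδ₁.ne']
    module
  have hsegment : δ / (1 + δ) * φ z + 1 / (1 + δ) * φ z' ≤
      δ / (1 + δ) * g z + 1 / (1 + δ) * φ z' := calc
    _ ≤ φ x₀ := by
      simpa only [smul_eq_mul, hcomb] using
        hφ.2 (hhull hz) (hhull hz') (by positivity) (by positivity) hab
    _ ≤ g x₀ := by rwa [hg_sum w hw₁]
    _ = δ / (1 + δ) * g z + 1 / (1 + δ) * g z' := by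
      rw [← hcomb, Convex.combo_affine_apply hab, smul_eq_mul, smul_eq_mul]
    _ ≤ _ := by gcongr; exact hle _ hz'
  exact le_of_mul_le_mul_left (a := δ / (1 + δ)) (by linarith) (by positivity)

end ConcaveOn

section UpperEnvelope

noncomputable def upperEnvelope {E : Type*} (K : Set (E × ℝ)) (x : E) : ℝ :=
  sSup {t | (x, t) ∈ K}

variable {E : Type*} [TopologicalSpace E] {K : Set (E × ℝ)} {x : E} {t : ℝ}

theorem IsCompact.bddAbove_fiber (hK : IsCompact K) (x : E) : BddAbove {t | (x, t) ∈ K} :=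
  (hK.image continuous_snd).bddAbove.mono fun _ ht => mem_image_of_mem Prod.snd ht

theorem IsCompact.le_upperEnvelope (hK : IsCompact K) (h : (x, t) ∈ K) :
    t ≤ upperEnvelope K x :=
  le_csSup (hK.bddAbove_fiber x) h

theorem IsCompact.mk_upperEnvelope_mem [T2Space E] (hK : IsCompact K) (h : (x, t) ∈ K) :
    (x, upperEnvelope K x) ∈ K :=
  (hK.isClosed.preimage (Continuous.prodMk_right x)).csSup_mem ⟨t, h⟩ (hK.bddAbove_fiber x)

theorem IsCompact.concaveOn_upperEnvelope [AddCommGroup E] [Module ℝ E] [T2Space E]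
    (hK : IsCompact K) (hKc : Convex ℝ K) :
    ConcaveOn ℝ (Prod.fst '' K) (upperEnvelope K) := by
  refine ⟨hKc.linear_image (LinearMap.fst ℝ E ℝ), ?_⟩
  rintro _ ⟨⟨x, s⟩, hs, rfl⟩ _ ⟨⟨y, t⟩, ht, rfl⟩ a b ha hb hab
  apply hK.le_upperEnvelope
  simpa using hKc (hK.mk_upperEnvelope_mem hs) (hK.mk_upperEnvelope_mem ht) ha hb hab

end UpperEnvelope

section ConvexHullGraph

variable {E : Type*} [AddCommGroup E] [Module ℝ E]

theorem isGreatest_convexHull_graph_fiber_of_minimal [TopologicalSpace E] [T2Space E]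
    {ω S : Set E} {f φ : E → ℝ}
    (hK : IsCompact (convexHull ℝ ((fun z => (z, f z)) '' S)))
    (hSω : S ⊆ ω) (hωS : ω ⊆ convexHull ℝ S) (hφ : ConcaveOn ℝ ω φ) (hmaj : ∀ z ∈ S, f z ≤ φ z)
    (hmin : ∀ G : E → ℝ, ConcaveOn ℝ ω G → (∀ z ∈ S, f z ≤ G z) → ∀ x ∈ ω, φ x ≤ G x)
    {x : E} (hx : x ∈ ω) :
    IsGreatest {t | (x, t) ∈ convexHull ℝ ((fun z => (z, f z)) '' S)} (φ x) := by
  set K := convexHull ℝ ((fun z => (z, f z)) '' S)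
  have hfst : Prod.fst '' K = convexHull ℝ S := by
    simpa [image_image] using (LinearMap.fst ℝ E ℝ).image_convexHull ((fun z => (z, f z)) '' S)
  have hhypo : K ⊆ {q | q.1 ∈ ω ∧ q.2 ≤ φ q.1} :=
    convexHull_min (by rintro _ ⟨z, hz, rfl⟩; exact ⟨hSω hz, hmaj z hz⟩) hφ.convex_hypograph
  obtain ⟨q, hqK, hqx⟩ := hfst.ge (hωS hx)
  have hxt : (x, q.2) ∈ K := hqx ▸ hqK
  have hconc : ConcaveOn ℝ ω (upperEnvelope K) :=
    (hK.concaveOn_upperEnvelope (convex_convexHull ℝ _)).subset (hωS.trans hfst.ge) hφ.1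
  have hle : φ x ≤ upperEnvelope K x := hmin _ hconc
    (fun z hz => hK.le_upperEnvelope (subset_convexHull ℝ _ ⟨z, hz, rfl⟩)) _ hx
  have hmem := hK.mk_upperEnvelope_mem hxt
  have heq : upperEnvelope K x = φ x := le_antisymm (hhypo hmem).2 hle
  exact ⟨heq ▸ hmem, fun t ht => (hhypo ht).2⟩

theorem exists_pos_convex_span_affineIndependent_fst_of_isGreatest {A : Set (E × ℝ)} {x : E}
    {t : ℝ} (h : IsGreatest {s | (x, s) ∈ convexHull ℝ A} t) :
    ∃ (k : ℕ) (p : Fin k → E × ℝ) (w : Fin k → ℝ), range p ⊆ A ∧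
      AffineIndependent ℝ (Prod.fst ∘ p) ∧ (∀ i, 0 < w i) ∧ ∑ i, w i = 1 ∧
      ∑ i, w i • p i = (x, t) := by
  obtain ⟨k, p, w, hpA, hp, hw₀, hw₁, hsum⟩ := exists_fin_pos_convex_span_of_mem_convexHull h.1
  refine ⟨k, p, w, hpA, ?_, hw₀, hw₁, hsum⟩
  have hx : ∑ i, w i • (p i).1 = x := by simpa [Prod.fst_sum] using congrArg Prod.fst hsum
  have ht : ∑ i, w i * (p i).2 = t := by simpa [Prod.snd_sum] using congrArg Prod.snd hsum
  have hnonpos : ∀ u : Fin k → ℝ, ∑ i, u i = 0 → ∑ i, u i • (p i).1 = 0 →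
      ∑ i, u i * (p i).2 ≤ 0 := by
    intro u hu₀ hu₁
    obtain ⟨ε, hε, hwε⟩ := exists_pos_forall_pos_add_mul hw₀ u
    have hmem : (x, t + ε * ∑ i, u i * (p i).2) ∈ convexHull ℝ A := by
      refine mem_convexHull_of_exists_fintype (w + ε • u) p (fun i => (hwε i).le) ?_
        (fun i => hpA (mem_range_self i)) ?_
      · simp [sum_add_distrib, ← mul_sum, hw₁, hu₀]
      · ext
        · simp [Prod.fst_sum, add_smul, mul_smul, sum_add_distrib, ← smul_sum, hx, hu₁]
        · simp [Prod.snd_sum, add_mul, mul_assoc, sum_add_distrib, ← mul_sum, ht]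
    nlinarith [h.2 hmem]
  rw [affineIndependent_iff_of_fintype]
  intro u hu₀ hu₁ i
  rw [Finset.weightedVSub_eq_linear_combination _ hu₀] at hu₁
  have hr : ∑ i, u i * (p i).2 = 0 := by
    refine le_antisymm (hnonpos u hu₀ hu₁) ?_
    simpa using hnonpos (-u) (by simp [hu₀]) (by simpa using hu₁)
  refine hp.eq_zero_of_sum_eq_zero (s := Finset.univ) hu₀ ?_ i (Finset.mem_univ i)
  ext
  · simpa [Prod.fst_sum] using hu₁
  · simpa [Prod.snd_sum] using hr

end ConvexHullGraph

theorem minimal_concave_caratheodory_general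
    (d : ℕ) (ω : Set (EuclideanSpace ℝ (Fin d)))
    (hωc : IsCompact ω)
    (f : EuclideanSpace ℝ (Fin d) → ℝ) (hf : ContinuousOn f (frontier ω))
    (𝔅 : EuclideanSpace ℝ (Fin d) → ℝ)
    (h𝔅conc : ConcaveOn ℝ ω 𝔅)
    (h𝔅maj : ∀ z ∈ frontier ω, f z ≤ 𝔅 z)
    (h𝔅min : ∀ G : EuclideanSpace ℝ (Fin d) → ℝ,
      ConcaveOn ℝ ω G → (∀ z ∈ frontier ω, f z ≤ G z) → ∀ x ∈ ω, 𝔅 x ≤ G x) :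
    ∀ x₀ ∈ ω, ∃ (k : ℕ), k ≤ d + 1 ∧ ∃ xs : Fin k → EuclideanSpace ℝ (Fin d),
      (∀ i, xs i ∈ frontier ω) ∧
      x₀ ∈ convexHull ℝ (Set.range xs) ∧
      (∀ i, 𝔅 (xs i) = f (xs i)) ∧
      ∃ g : EuclideanSpace ℝ (Fin d) →ᵃ[ℝ] ℝ,
        ∀ z ∈ convexHull ℝ (Set.range xs), 𝔅 z = g z := by
  intro x₀ hx₀
  have hSω : frontier ω ⊆ ω := hωc.isClosed.frontier_subset
  obtain ⟨y, hy⟩ : (frontier ω).Nonempty := by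
    by_contra hS
    have := h𝔅min (fun _ => 𝔅 x₀ - 1) (concaveOn_const _ h𝔅conc.1)
      (by simp [not_nonempty_iff_eq_empty.1 hS]) x₀ hx₀
    linarith
  have hK : IsCompact (convexHull ℝ ((fun z => (z, f z)) '' frontier ω)) :=
    isCompact_convexHull <| (hωc.of_isClosed_subset isClosed_frontier hSω).image_of_continuousOn
      (continuousOn_id.prodMk hf)
  obtain ⟨k, p, w, hpA, hp, hw₀, hw₁, hsum⟩ :=
    exists_pos_convex_span_affineIndependent_fst_of_isGreatest <|
      isGreatest_convexHull_graph_fiber_of_minimal hK hSω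
        (fun _ hx => hωc.mem_convexHull_frontier hx hy) h𝔅conc h𝔅maj h𝔅min hx₀
  have hpS : ∀ i, (p i).1 ∈ frontier ω ∧ (p i).2 = f (p i).1 := by
    intro i
    obtain ⟨z, hz, hzp⟩ := hpA (mem_range_self i)
    exact hzp ▸ ⟨hz, rfl⟩
  have hx : ∑ i, w i • (p i).1 = x₀ := by simpa [Prod.fst_sum] using congrArg Prod.fst hsum
  have ht : ∑ i, w i * f (p i).1 = 𝔅 x₀ := by
    simpa [Prod.snd_sum, (hpS _).2] using congrArg Prod.snd hsum
  have h𝔅f : ∀ i, 𝔅 (p i).1 = f (p i).1 := h𝔅conc.eq_of_le_of_map_sum_le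
    (fun i => hSω (hpS i).1) hw₀ hw₁ (fun i => h𝔅maj _ (hpS i).1) (by rw [hx, ht])
  obtain ⟨g, hg⟩ := h𝔅conc.exists_affineMap_eqOn_convexHull (fun i => hSω (hpS i).1) hp hw₀ hw₁
    (by simp [h𝔅f, hx, ht])
  refine ⟨k, by simpa using hp.le_finrank_succ, Prod.fst ∘ p, fun i => (hpS i).1, ?_, h𝔅f, g, hg⟩
  exact mem_convexHull_range_iff.2 ⟨w, fun i => (hw₀ i).le, hw₁, hx⟩

theorem minimal_concave_caratheodory
    (d : ℕ) (ω : Set (EuclideanSpace ℝ (Fin d)))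
    (hωc : IsCompact ω) (hωsc : StrictConvex ℝ ω)
    (hωint : (interior ω).Nonempty)
    (f : EuclideanSpace ℝ (Fin d) → ℝ) (hf : ContinuousOn f (frontier ω))
    (𝔅 : EuclideanSpace ℝ (Fin d) → ℝ)
    (h𝔅conc : ConcaveOn ℝ ω 𝔅)
    (h𝔅maj : ∀ z ∈ frontier ω, f z ≤ 𝔅 z)
    (h𝔅min : ∀ G : EuclideanSpace ℝ (Fin d) → ℝ,
      ConcaveOn ℝ ω G → (∀ z ∈ frontier ω, f z ≤ G z) → ∀ x ∈ ω, 𝔅 x ≤ G x) :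
    ∀ x₀ ∈ ω, ∃ (k : ℕ), k ≤ d + 1 ∧ ∃ xs : Fin k → EuclideanSpace ℝ (Fin d),
      (∀ i, xs i ∈ frontier ω) ∧
      x₀ ∈ convexHull ℝ (Set.range xs) ∧
      (∀ i, 𝔅 (xs i) = f (xs i)) ∧
      ∃ g : EuclideanSpace ℝ (Fin d) →ᵃ[ℝ] ℝ,
        ∀ z ∈ convexHull ℝ (Set.range xs), 𝔅 z = g z :=
  minimal_concave_caratheodory_general d ω hωc f hf 𝔅 h𝔅conc h𝔅maj h𝔅min
end

section
/- Let γ = (γ₁, γ₂) : I → ℝ² and f : I → ℝ be C³ with γ₁' > 0 on I. Set v = γ₂'/γ₁' and u = f'/γ₁'. Then (u''v' - u'v'')·(γ₁')³ equals the 3×3 determinant with rows (γ₁', γ₂', f'), (γ₁'', γ₂'', f''), (γ₁''', γ₂''', f'''). -/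
/-!
With `q = γ₁'` we have `γ₂' = v q` and `f' = u q`. Subtracting `v(t)` times the first column of
the determinant from the second and `u(t)` times it from the third leaves the columns
`(0, v' q, v'' q + 2 v' q')` and `(0, u' q, u'' q + 2 u' q')`, so the determinant is
`q³ (u'' v' - u' v'')`. In the proof, the quotient rule expresses `u', u'', v', v''` through the
derivatives of `γ₁, γ₂, f`, after which the identity is polynomial.
-/

open Filter Topology

section QuotientRule

variable {p q : ℝ → ℝ} {t : ℝ}

theorem deriv_div_eventuallyEq (hp : ContDiffAt ℝ 1 p t) (hq : ContDiffAt ℝ 1 q t)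
    (hq0 : q t ≠ 0) :
    deriv (fun x => p x / q x) =ᶠ[𝓝 t]
      fun x => (deriv p x * q x - p x * deriv q x) / q x ^ 2 := by
  filter_upwards [hp.eventually (by simp), hq.eventually (by simp),
    hq.continuousAt.eventually_ne hq0] with x hpx hqx hq0x
  exact deriv_fun_div (hpx.differentiableAt one_ne_zero) (hqx.differentiableAt one_ne_zero) hq0x

theorem deriv_deriv_div (hp : ContDiffAt ℝ 2 p t) (hq : ContDiffAt ℝ 2 q t) (hq0 : q t ≠ 0) :
    deriv (deriv fun x => p x / q x) t =
      ((deriv (deriv p) t * q t - p t * deriv (deriv q) t) * q t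
        - 2 * deriv q t * (deriv p t * q t - p t * deriv q t)) / q t ^ 3 := by
  have hp₁ : DifferentiableAt ℝ p t := hp.differentiableAt two_ne_zero
  have hq₁ : DifferentiableAt ℝ q t := hq.differentiableAt two_ne_zero
  have hp₂ : DifferentiableAt ℝ (deriv p) t :=
    (hp.derivWithin (m := 1) le_rfl).differentiableAt one_ne_zero
  have hq₂ : DifferentiableAt ℝ (deriv q) t :=
    (hq.derivWithin (m := 1) le_rfl).differentiableAt one_ne_zero
  have hderiv := ((hp₂.hasDerivAt.fun_mul hq₁.hasDerivAt).fun_sub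
    (hp₁.hasDerivAt.fun_mul hq₂.hasDerivAt)).fun_div (hq₁.hasDerivAt.fun_pow 2) (pow_ne_zero 2 hq0)
  rw [(deriv_div_eventuallyEq (hp.of_le one_le_two) (hq.of_le one_le_two) hq0).deriv_eq,
    hderiv.deriv]
  field_simp
  ring

end QuotientRule

theorem torsion_determinant_identity_general
    (a b : ℝ) (γ₁ γ₂ f : ℝ → ℝ)
    (hγ₁ : ContDiffOn ℝ 3 γ₁ (Set.Ioo a b))
    (hγ₂ : ContDiffOn ℝ 3 γ₂ (Set.Ioo a b))
    (hf : ContDiffOn ℝ 3 f (Set.Ioo a b))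
    (hγ₁' : ∀ t ∈ Set.Ioo a b, 0 < deriv γ₁ t)
    (v u : ℝ → ℝ)
    (hv : ∀ t ∈ Set.Ioo a b, v t = deriv γ₂ t / deriv γ₁ t)
    (hu : ∀ t ∈ Set.Ioo a b, u t = deriv f t / deriv γ₁ t) :
    ∀ t ∈ Set.Ioo a b,
      (deriv (deriv u) t * deriv v t - deriv u t * deriv (deriv v) t) *
          (deriv γ₁ t) ^ 3 =
        Matrix.det !![deriv γ₁ t, deriv γ₂ t, deriv f t;
          deriv (deriv γ₁) t, deriv (deriv γ₂) t, deriv (deriv f) t;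
          deriv (deriv (deriv γ₁)) t, deriv (deriv (deriv γ₂)) t,
            deriv (deriv (deriv f)) t] := by
  intro t ht
  have hI : Set.Ioo a b ∈ 𝓝 t := isOpen_Ioo.mem_nhds ht
  have hC2 {g : ℝ → ℝ} (hg : ContDiffOn ℝ 3 g (Set.Ioo a b)) : ContDiffAt ℝ 2 (deriv g) t :=
    (hg.contDiffAt hI).derivWithin (by norm_num)
  have hq0 : deriv γ₁ t ≠ 0 := (hγ₁' t ht).ne'
  have hu' : u =ᶠ[𝓝 t] fun x => deriv f x / deriv γ₁ x := eventually_of_mem hI hu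
  have hv' : v =ᶠ[𝓝 t] fun x => deriv γ₂ x / deriv γ₁ x := eventually_of_mem hI hv
  rw [hu'.deriv_eq, hu'.deriv.deriv_eq, hv'.deriv_eq, hv'.deriv.deriv_eq,
    deriv_deriv_div (hC2 hf) (hC2 hγ₁) hq0, deriv_deriv_div (hC2 hγ₂) (hC2 hγ₁) hq0,
    (deriv_div_eventuallyEq ((hC2 hf).of_le one_le_two) ((hC2 hγ₁).of_le one_le_two) hq0).eq_of_nhds,
    (deriv_div_eventuallyEq ((hC2 hγ₂).of_le one_le_two) ((hC2 hγ₁).of_le one_le_two) hq0).eq_of_nhds,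
    Matrix.det_fin_three]
  simp only [Matrix.of_apply, Matrix.cons_val', Matrix.cons_val_zero, Matrix.cons_val_one,
    Matrix.cons_val_fin_one, Matrix.cons_val]
  field_simp
  ring

theorem torsion_determinant_identity
    (a b : ℝ) (hab : a < b) (γ₁ γ₂ f : ℝ → ℝ)
    (hγ₁ : ContDiffOn ℝ 3 γ₁ (Set.Ioo a b))
    (hγ₂ : ContDiffOn ℝ 3 γ₂ (Set.Ioo a b))
    (hf : ContDiffOn ℝ 3 f (Set.Ioo a b))
    (hγ₁' : ∀ t ∈ Set.Ioo a b, 0 < deriv γ₁ t)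
    (v u : ℝ → ℝ)
    (hv : ∀ t ∈ Set.Ioo a b, v t = deriv γ₂ t / deriv γ₁ t)
    (hu : ∀ t ∈ Set.Ioo a b, u t = deriv f t / deriv γ₁ t) :
    ∀ t ∈ Set.Ioo a b,
      (deriv (deriv u) t * deriv v t - deriv u t * deriv (deriv v) t) *
          (deriv γ₁ t) ^ 3 =
        Matrix.det !![deriv γ₁ t, deriv γ₂ t, deriv f t;
          deriv (deriv γ₁) t, deriv (deriv γ₂) t, deriv (deriv f) t;
          deriv (deriv (deriv γ₁)) t, deriv (deriv (deriv γ₂)) t,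
            deriv (deriv (deriv f)) t] :=
  torsion_determinant_identity_general a b γ₁ γ₂ f hγ₁ hγ₂ hf hγ₁' v u hv hu
end
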